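/- arXiv:1903.00118 — 8 statements merged into one kernel-verified Lean document; each statement's English description precedes it below -/
import Mathlib

section
/- Let p be an odd prime, g a primitive root modulo p, and let k₁, k₂ be integers with 1 ≤ k₁ ≤ k₂ and gcd(p, k₂!) = 1. Set N = {ind_g(k) : k ∈ [−k₁, k₂], k ≠ 0} and, for a subset B of Z_p \ {0}, set A = {ind_g(b) : b ∈ B}. Then B is a perfect B[−k₁,k₂](p) set if and only if N + A = Z_{p−1} is a factorization of the additive group Z_{p−1}. -/
/-- `B` is a perfect `B[-k₁,k₂](q)` set: every nonzero element of `ZMod q` is uniquely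
`a * b` with `a ∈ [-k₁,k₂] \ {0}`, `b ∈ B`, and `(k₁+k₂) * |B| = q - 1`. -/
def IsPerfectSplitter (k₁ k₂ q : ℕ) (B : Finset (ZMod q)) : Prop :=
  (∀ g : ZMod q, g ≠ 0 → ∃! r : ℤ × ZMod q,
      r.1 ∈ Finset.Icc (-(k₁ : ℤ)) (k₂ : ℤ) ∧ r.1 ≠ 0 ∧ r.2 ∈ B ∧ (r.1 : ZMod q) * r.2 = g) ∧
    (k₁ + k₂) * B.card = q - 1

theorem stmt3 (p : ℕ) (hp : p.Prime) (hodd : Odd p)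
    (k₁ k₂ : ℕ) (h1 : 1 ≤ k₁) (h12 : k₁ ≤ k₂) (hcop : Nat.gcd p k₂.factorial = 1)
    (g : ZMod p) (hg : IsPrimitiveRoot g (p - 1))
    (ind : ZMod p → ℕ)
    (hind : ∀ x : ZMod p, x ≠ 0 → g ^ ind x = x ∧ ind x ≤ p - 2)
    (B : Finset (ZMod p)) (hB0 : (0 : ZMod p) ∉ B) :
    IsPerfectSplitter k₁ k₂ p B ↔
      ∀ z : ZMod (p - 1), ∃! r : ℤ × ZMod p,
        r.1 ∈ Finset.Icc (-(k₁ : ℤ)) (k₂ : ℤ) ∧ r.1 ≠ 0 ∧ r.2 ∈ B ∧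
          ((ind ((r.1 : ZMod p)) : ZMod (p - 1)) + (ind r.2 : ZMod (p - 1)) = z) := by
  haveI := Fact.mk hp
  have hp3 : 3 ≤ p := by
    have h2 := hp.two_le
    have : p ≠ 2 := by rintro rfl; exact ((Nat.not_odd_iff_even.mpr ·) (by decide)) hodd
    omega
  haveI : NeZero (p - 1) := ⟨by omega⟩
  have horder : orderOf g = p - 1 := hg.eq_orderOf.symm
  have hg0 : g ≠ 0 := by
    intro h
    have h1 := hg.pow_eq_one
    rw [h, zero_pow (by omega)] at h1
    exact one_ne_zero h1.symm
  -- k₂ < p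
  have hk2p : k₂ < p := by
    by_contra h
    have hdvd : p ∣ k₂.factorial := Nat.dvd_factorial hp.pos (by omega)
    rw [Nat.gcd_eq_left hdvd] at hcop
    omega
  -- (a : ZMod p) ≠ 0 for a in the range
  have hane : ∀ a : ℤ, a ∈ Finset.Icc (-(k₁ : ℤ)) (k₂ : ℤ) → a ≠ 0 → (a : ZMod p) ≠ 0 := by
    intro a ha ha0 h
    rw [ZMod.intCast_zmod_eq_zero_iff_dvd] at h
    have hle : (p : ℤ) ≤ |a| := Int.le_of_dvd (abs_pos.mpr ha0) ((dvd_abs _ _).mpr h)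
    rw [Finset.mem_Icc] at ha
    have : |a| ≤ (k₂ : ℤ) := abs_le.mpr ⟨by omega, ha.2⟩
    omega
  have hbne : ∀ b : ZMod p, b ∈ B → b ≠ 0 := fun b hb h => hB0 (h ▸ hb)
  -- pow/cast equivalence
  obtain ⟨u, hu⟩ : IsUnit g := IsUnit.of_pow_eq_one hg.pow_eq_one (by omega)
  have hpowiff : ∀ m n : ℕ, g ^ m = g ^ n ↔ ((m : ZMod (p - 1)) = (n : ZMod (p - 1))) := by
    intro m n
    have hcoe : ∀ k : ℕ, g ^ k = ((u ^ k : (ZMod p)ˣ) : ZMod p) := by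
      intro k; rw [Units.val_pow_eq_pow_val, hu]
    rw [hcoe, hcoe, Units.val_inj, pow_eq_pow_iff_modEq, ← orderOf_units, hu, horder,
      ← ZMod.natCast_eq_natCast_iff]
  -- key pointwise equivalence
  have key : ∀ (z : ZMod (p - 1)) (r : ℤ × ZMod p),
      r.1 ∈ Finset.Icc (-(k₁ : ℤ)) (k₂ : ℤ) → r.1 ≠ 0 → r.2 ∈ B →
      (((ind ((r.1 : ZMod p)) : ZMod (p - 1)) + (ind r.2 : ZMod (p - 1)) = z) ↔
        (r.1 : ZMod p) * r.2 = g ^ z.val) := by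
    intro z r hr1 hr2 hr3
    have ha := (hind _ (hane r.1 hr1 hr2)).1
    have hb := (hind _ (hbne r.2 hr3)).1
    have hab : (r.1 : ZMod p) * r.2 = g ^ (ind (r.1 : ZMod p) + ind r.2) := by
      rw [pow_add, ha, hb]
    rw [hab, hpowiff]
    push_cast
    rw [ZMod.natCast_val, ZMod.cast_id]
  constructor
  · rintro ⟨hsp, -⟩ z
    obtain ⟨r, ⟨hr1, hr2, hr3, hr4⟩, hu⟩ := hsp (g ^ z.val) (pow_ne_zero _ hg0)
    exact ⟨r, ⟨hr1, hr2, hr3, (key z r hr1 hr2 hr3).mpr hr4⟩,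
      fun y hy => hu y ⟨hy.1, hy.2.1, hy.2.2.1, (key z y hy.1 hy.2.1 hy.2.2.1).mp hy.2.2.2⟩⟩
  · intro hf
    constructor
    · intro x hx
      set z : ZMod (p - 1) := (ind x : ZMod (p - 1)) with hz
      have hgz : g ^ z.val = x := by
        have h1 : (z.val : ZMod (p - 1)) = ((ind x : ℕ) : ZMod (p - 1)) := by
          rw [ZMod.natCast_val, ZMod.cast_id]
        rw [(hpowiff z.val (ind x)).mpr h1, (hind x hx).1]
      obtain ⟨r, ⟨hr1, hr2, hr3, hr4⟩, hu⟩ := hf z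
      exact ⟨r, ⟨hr1, hr2, hr3, by rw [← hgz]; exact (key z r hr1 hr2 hr3).mp hr4⟩,
        fun y hy => hu y ⟨hy.1, hy.2.1, hy.2.2.1,
          (key z y hy.1 hy.2.1 hy.2.2.1).mpr (by rw [hgz]; exact hy.2.2.2)⟩⟩
    · -- counting
      have hcard : ((Finset.Icc (-(k₁ : ℤ)) (k₂ : ℤ)).erase 0 ×ˢ B).card
          = Fintype.card (ZMod (p - 1)) := by
        apply Finset.card_bij
          (fun r _ => ((ind ((r.1 : ZMod p)) : ZMod (p - 1)) + (ind r.2 : ZMod (p - 1))))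
        · intro r hr; exact Finset.mem_univ _
        · intro r hr s hs h
          rw [Finset.mem_product, Finset.mem_erase] at hr hs
          obtain ⟨y, hy, hu⟩ := hf ((ind ((r.1 : ZMod p)) : ZMod (p - 1)) + (ind r.2 : ZMod (p - 1)))
          have h1 := hu r ⟨hr.1.2, hr.1.1, hr.2, rfl⟩
          have h2 := hu s ⟨hs.1.2, hs.1.1, hs.2, h.symm⟩
          rw [h1, h2]
        · intro z _
          obtain ⟨r, ⟨hr1, hr2, hr3, hr4⟩, -⟩ := hf z
          exact ⟨r, by rw [Finset.mem_product, Finset.mem_erase]; exact ⟨⟨hr2, hr1⟩, hr3⟩, hr4⟩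
      rw [Finset.card_product, Finset.card_erase_of_mem (by
            rw [Finset.mem_Icc]; constructor <;> omega),
          Int.card_Icc, ZMod.card] at hcard
      have h2 : ((k₂ : ℤ) + 1 - -(k₁ : ℤ)).toNat = k₁ + k₂ + 1 := by omega
      rw [h2] at hcard
      have h3 : k₁ + k₂ + 1 - 1 = k₁ + k₂ := by omega
      rw [h3] at hcard
      exact hcard
end

section
/- Suppose there exists a perfect B[−k₁,k₂](m) set, p is a prime dividing m, a and r are positive integers with a | p−1, gcd(a(k₁+k₂), r) = 1, p | a(k₁+k₂)+r, r ≤ a, and ⌊k₁/p⌋ + ⌊k₂/p⌋ = ⌊(k₁+k₂)/p⌋. Then a(k₁+k₂)+r divides m. -/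
/-!
Write `K = k₁ + k₂`. The products `s * b` of a multiplier `s ∈ [-k₁, k₂] \ {0}` and `b ∈ B` run
exactly once through the nonzero elements of `ℤ/m`, so `K |B| = m - 1` and no product vanishes. As
`p` is prime, `p ∣ s * b` iff `p ∣ s` or `p ∣ b`, so counting the nonzero multiples of `p` gives
`q |B| + (K - q) |B₀| = m/p - 1`, where `B₀ = {b ∈ B | p ∣ b}` and, by the floor condition,
`q = ⌊k₁/p⌋ + ⌊k₂/p⌋ = ⌊K/p⌋` multipliers are divisible by `p`.

With `a d = p - 1`, the conditions `p ∣ a K + r` and `r ≤ a` force `K mod p = r d`. Substituting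
into the two counts yields `a m = (a K + r)(|B| - |B₀|)`, and `a K + r` is coprime to `a`.
-/

open Finset

noncomputable def multipliers (k₁ k₂ : ℕ) : Finset ℤ := (Icc (-(k₁ : ℤ)) k₂).erase 0

theorem card_multipliers (k₁ k₂ : ℕ) : #(multipliers k₁ k₂) = k₁ + k₂ := by
  rw [multipliers, card_erase_of_mem (by simp), Int.card_Icc]
  omega

theorem filter_dvd_multipliers {p : ℕ} (hp : 0 < p) (k₁ k₂ : ℕ) :
    {s ∈ multipliers k₁ k₂ | (p : ℤ) ∣ s} =
      (multipliers (k₁ / p) (k₂ / p)).map ⟨(· * (p : ℤ)), mul_left_injective₀ (by positivity)⟩ := by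
  have hp' : (0 : ℤ) < p := by exact_mod_cast hp
  ext s
  simp only [multipliers, mem_filter, mem_erase, mem_Icc, mem_map, Function.Embedding.coeFn_mk,
    dvd_iff_exists_eq_mul_left]
  constructor
  · rintro ⟨⟨hs0, hs1, hs2⟩, u, rfl⟩
    refine ⟨u, ⟨?_, ?_, ?_⟩, rfl⟩
    · rintro rfl
      simp at hs0
    · push_cast
      rw [neg_le, Int.le_ediv_iff_mul_le hp']
      linarith
    · push_cast
      rwa [Int.le_ediv_iff_mul_le hp']
  · rintro ⟨u, ⟨hu0, hu1, hu2⟩, rfl⟩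
    push_cast at hu1 hu2
    rw [neg_le, Int.le_ediv_iff_mul_le hp'] at hu1
    rw [Int.le_ediv_iff_mul_le hp'] at hu2
    exact ⟨⟨mul_ne_zero hu0 hp'.ne', by linarith, hu2⟩, u, rfl⟩

theorem card_filter_dvd_multipliers {p : ℕ} (hp : 0 < p) (k₁ k₂ : ℕ) :
    #{s ∈ multipliers k₁ k₂ | (p : ℤ) ∣ s} = k₁ / p + k₂ / p := by
  rw [filter_dvd_multipliers hp, card_map, card_multipliers]

theorem card_ker_castHom {m p : ℕ} [NeZero m] [NeZero p] (hpm : p ∣ m) :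
    #{x : ZMod m | ZMod.castHom hpm (ZMod p) x = 0} = m / p := by
  have h := (ZMod.castHom hpm (ZMod p)).toAddMonoidHom.ker.card_mul_index
  rw [AddSubgroup.index_ker,
    AddMonoidHom.range_eq_top_of_surjective _ (ZMod.castHom_surjective hpm),
    AddSubgroup.card_top, Nat.card_zmod, Nat.card_zmod] at h
  rw [← Fintype.card_subtype, ← Nat.card_eq_fintype_card]
  exact (Nat.div_eq_of_eq_mul_left (NeZero.pos p) h.symm).symm

theorem card_filter_castHom_mul_eq_zero {m p : ℕ} [Fact p.Prime] (hpm : p ∣ m)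
    (S : Finset ℤ) (B : Finset (ZMod m)) :
    #{r ∈ S ×ˢ B | ZMod.castHom hpm (ZMod p) (r.1 * r.2) = 0} =
      #{s ∈ S | (p : ℤ) ∣ s} * #B +
        #{s ∈ S | ¬(p : ℤ) ∣ s} * #{b ∈ B | ZMod.castHom hpm (ZMod p) b = 0} := by
  have hrow (s : ℤ) : #{b ∈ B | ZMod.castHom hpm (ZMod p) (s * b) = 0} =
      if (p : ℤ) ∣ s then #B else #{b ∈ B | ZMod.castHom hpm (ZMod p) b = 0} := by
    simp_rw [map_mul, map_intCast, mul_eq_zero, ZMod.intCast_zmod_eq_zero_iff_dvd]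
    split_ifs with h <;> simp only [h, true_or, false_or, filter_true]
  rw [card_eq_sum_ones, sum_filter, sum_product]
  simp only [← sum_filter, ← card_eq_sum_ones, hrow]
  rw [sum_ite, sum_const, sum_const, smul_eq_mul, smul_eq_mul]

namespace IsPerfectSplitter

variable {k₁ k₂ m : ℕ} {B : Finset (ZMod m)}

theorem ne_zero (hB : IsPerfectSplitter k₁ k₂ m B) : m ≠ 0 := by
  rintro rfl
  obtain ⟨⟨s, b⟩, ⟨hs, hs0, hb, -⟩, -⟩ := hB.1 1 one_ne_zero
  have hk : k₁ + k₂ ≠ 0 := by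
    rw [mem_Icc] at hs
    omega
  exact mul_ne_zero hk (card_ne_zero_of_mem hb) hB.2

theorem mul_card_add_one (hB : IsPerfectSplitter k₁ k₂ m B) : (k₁ + k₂) * #B + 1 = m := by
  have := hB.ne_zero
  have := hB.2
  omega

theorem card_filter_mul_mem (hB : IsPerfectSplitter k₁ k₂ m B) {D : Finset (ZMod m)}
    (hD : 0 ∉ D) : #{r ∈ multipliers k₁ k₂ ×ˢ B | (r.1 : ZMod m) * r.2 ∈ D} = #D := by
  refine card_nbij (fun r ↦ (r.1 : ZMod m) * r.2) (fun r hr ↦ (mem_filter.1 hr).2) ?_ ?_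
  · rintro ⟨s, b⟩ hr ⟨t, c⟩ hr' (h : (s : ZMod m) * b = t * c)
    simp only [mem_coe, mem_filter, multipliers, mem_product, mem_erase] at hr hr'
    obtain ⟨u, -, hu⟩ := hB.1 _ (ne_of_mem_of_not_mem hr.2 hD)
    exact (hu _ ⟨hr.1.1.2, hr.1.1.1, hr.1.2, rfl⟩).trans
      (hu _ ⟨hr'.1.1.2, hr'.1.1.1, hr'.1.2, h.symm⟩).symm
  · intro g hg
    obtain ⟨⟨s, b⟩, ⟨hs, hs0, hb, rfl⟩, -⟩ := hB.1 g (ne_of_mem_of_not_mem hg hD)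
    exact ⟨(s, b), mem_filter.2 ⟨mem_product.2 ⟨mem_erase.2 ⟨hs0, hs⟩, hb⟩, mem_coe.1 hg⟩, rfl⟩

theorem intCast_mul_ne_zero [NeZero m] (hB : IsPerfectSplitter k₁ k₂ m B) {s : ℤ} {b : ZMod m}
    (hs : s ∈ multipliers k₁ k₂) (hb : b ∈ B) : (s : ZMod m) * b ≠ 0 := by
  have h := hB.card_filter_mul_mem (D := univ.erase 0) (by simp)
  rw [card_erase_of_mem (mem_univ _), card_univ, ZMod.card, ← hB.2, ← card_multipliers,
    ← card_product] at h
  simpa using filter_card_eq h (s, b) (mem_product.2 ⟨hs, hb⟩)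

theorem card_filter_castHom_mul_eq_zero_add_one (hB : IsPerfectSplitter k₁ k₂ m B) {p : ℕ}
    [NeZero p] (hpm : p ∣ m) :
    #{r ∈ multipliers k₁ k₂ ×ˢ B | ZMod.castHom hpm (ZMod p) (r.1 * r.2) = 0} + 1 = m / p := by
  have : NeZero m := ⟨hB.ne_zero⟩
  have h0 : (0 : ZMod m) ∈ ({x | ZMod.castHom hpm (ZMod p) x = 0} : Finset (ZMod m)) :=
    (mem_filter_univ _).2 (map_zero _)
  have h := hB.card_filter_mul_mem (notMem_erase 0 {x | ZMod.castHom hpm (ZMod p) x = 0})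
  rw [card_erase_of_mem h0, card_ker_castHom hpm] at h
  have hfilter : {r ∈ multipliers k₁ k₂ ×ˢ B | ZMod.castHom hpm (ZMod p) (r.1 * r.2) = 0} =
      {r ∈ multipliers k₁ k₂ ×ˢ B |
        (r.1 : ZMod m) * r.2 ∈ ({x | ZMod.castHom hpm (ZMod p) x = 0} : Finset (ZMod m)).erase 0} :=
    filter_congr fun r hr ↦ by
      obtain ⟨hs, hb⟩ := mem_product.1 hr
      simp only [mem_erase, mem_filter_univ, hB.intCast_mul_ne_zero hs hb, ne_eq, not_false_eq_true,
        true_and]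
  have := Nat.div_pos (Nat.le_of_dvd (NeZero.pos m) hpm) (NeZero.pos p)
  rw [hfilter, h]
  omega

end IsPerfectSplitter

theorem mod_eq_mul_of_dvd_mul_add {K p a d r : ℕ} (had : a * d + 1 = p)
    (hp : p ∣ a * K + r) (hra : r ≤ a) : K % p = r * d := by
  have hK : (K : ZMod p) = (r * d : ℕ) := by
    have had' : ((a * d + 1 : ℕ) : ZMod p) = 0 := (ZMod.natCast_eq_zero_iff _ _).2 had.symm.dvd
    have hp' : ((a * K + r : ℕ) : ZMod p) = 0 := (ZMod.natCast_eq_zero_iff _ _).2 hp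
    push_cast at had' hp' ⊢
    linear_combination K * had' - d * hp'
  rw [ZMod.natCast_eq_natCast_iff', Nat.mod_eq_of_lt (a := r * d)] at hK
  · exact hK
  · calc r * d ≤ a * d := Nat.mul_le_mul_right d hra
      _ < p := by omega

theorem mul_add_dvd_of_counts {K q q' m p a d r c₀ c₁ : ℕ} (had : a * d + 1 = p) (hd : d ≠ 0)
    (hK : p * q + r * d = K) (hq : q + q' = K) (hcop : Nat.Coprime a r)
    (h₀ : K * c₀ + 1 = m) (h₁ : p * (q * c₀ + q' * c₁ + 1) = m) : a * K + r ∣ m := by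
  zify at had hK hq h₀ h₁
  have hrc : (r * c₀ : ℤ) = p * (a * q + r) * c₁ + a := by
    refine mul_left_cancel₀ (a := (d : ℤ)) (by exact_mod_cast hd) ?_
    linear_combination h₀ - h₁ + c₀ * hK - had + p * c₁ * hq - p * c₁ * hK - p * c₁ * q * had
  have ham : (a * m : ℤ) = (a * K + r) * (c₀ - c₁) := by
    linear_combination -a * h₀ - hrc - a * c₁ * hK + r * c₁ * had
  have hcop' : Nat.Coprime (a * K + r) a := by
    rwa [Nat.coprime_mul_left_add_left, Nat.coprime_comm]
  refine hcop'.dvd_of_dvd_mul_left (Int.natCast_dvd_natCast.1 ⟨c₀ - c₁, ?_⟩)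
  push_cast
  linear_combination ham

theorem stmt10_general (k₁ k₂ m : ℕ)
    (B : Finset (ZMod m)) (hB : IsPerfectSplitter k₁ k₂ m B)
    (p : ℕ) (hp : p.Prime) (hpm : p ∣ m)
    (a r : ℕ) (hap : a ∣ p - 1)
    (hgcd : Nat.gcd (a * (k₁ + k₂)) r = 1) (hpdvd : p ∣ a * (k₁ + k₂) + r)
    (hra : r ≤ a) (hfloor : k₁ / p + k₂ / p = (k₁ + k₂) / p) :
    a * (k₁ + k₂) + r ∣ m := by
  have : Fact p.Prime := ⟨hp⟩
  obtain ⟨d, hd⟩ := hap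
  have had : a * d + 1 = p := by
    have := hp.one_lt
    omega
  have hd0 : d ≠ 0 := by
    rintro rfl
    have := hp.one_lt
    omega
  have hq : #{s ∈ multipliers k₁ k₂ | (p : ℤ) ∣ s} = (k₁ + k₂) / p := by
    rw [card_filter_dvd_multipliers hp.pos, hfloor]
  have hK : p * #{s ∈ multipliers k₁ k₂ | (p : ℤ) ∣ s} + r * d = k₁ + k₂ := by
    rw [hq, ← mod_eq_mul_of_dvd_mul_add had hpdvd hra, Nat.div_add_mod]
  have hcount := hB.card_filter_castHom_mul_eq_zero_add_one hpm
  rw [card_filter_castHom_mul_eq_zero] at hcount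
  exact mul_add_dvd_of_counts had hd0 hK
    ((card_filter_add_card_filter_not _).trans (card_multipliers k₁ k₂))
    (Nat.Coprime.coprime_mul_right hgcd) hB.mul_card_add_one (hcount ▸ Nat.mul_div_cancel' hpm)

theorem stmt10 (k₁ k₂ m : ℕ) (h1 : 1 ≤ k₁) (h12 : k₁ ≤ k₂)
    (B : Finset (ZMod m)) (hB : IsPerfectSplitter k₁ k₂ m B)
    (p : ℕ) (hp : p.Prime) (hpm : p ∣ m)
    (a r : ℕ) (ha : 0 < a) (hr : 0 < r) (hap : a ∣ p - 1)
    (hgcd : Nat.gcd (a * (k₁ + k₂)) r = 1) (hpdvd : p ∣ a * (k₁ + k₂) + r)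
    (hra : r ≤ a) (hfloor : k₁ / p + k₂ / p = (k₁ + k₂) / p) :
    a * (k₁ + k₂) + r ∣ m :=
  stmt10_general k₁ k₂ m B hB p hp hpm a r hap hgcd hpdvd hra hfloor
end

section
/- Let p be an odd prime with p ≡ 1 (mod k₁+k₂), 1 ≤ k₁ ≤ k₂, and gcd(p, k₂!) = 1. Then M = [−k₁,k₂] \ {0} (viewed in Z_p*) is a direct factor of the multiplicative group Z_p* if and only if M is a direct factor of the subgroup H of Z_p* generated by {−1, 2, …, k₂}. -/
/-!
Every `r ∈ [-k₁, k₂] \ {0}` is, up to sign, a natural number `j ≤ k₂`; since `j ∣ k₂!` is coprime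
to `p`, `r` is a unit of `ZMod p` lying in the subgroup `H` generated by `-1, 2, …, k₂`.
For a set `M ⊆ H`, restricting a factor `B` of the whole group to `B ∩ H` gives a factor of `H`;
conversely, if `B₀` is a factor of `H` and `T` is a right transversal of `H`, then `B₀ T` is a
factor of the group.
-/

open Pointwise

section Factorization

variable {M ι : Type*} [Monoid M]

def IsUniquelyFactored (P : ι → Prop) (φ : ι → M) (B : Set Mˣ) (g : Mˣ) : Prop :=
  ∃! r : ι × Mˣ, P r.1 ∧ r.2 ∈ B ∧ φ r.1 * r.2 = g

lemma mul_val_mul_eq_iff (x : M) (a c g : Mˣ) :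
    x * ↑(a * c) = g ↔ x * a = ↑(g * c⁻¹) := by
  rw [Units.val_mul, Units.val_mul, Units.eq_mul_inv_iff_mul_eq, mul_assoc]

variable {P : ι → Prop} {φ : ι → M} {H : Subgroup Mˣ}

lemma mem_iff_of_mul_val_eq (hφ : ∀ i, P i → ∃ u ∈ H, (u : M) = φ i) {i : ι} {b g : Mˣ}
    (hi : P i) (h : φ i * b = g) : b ∈ H ↔ g ∈ H := by
  obtain ⟨u, huH, hu⟩ := hφ i hi
  rw [← hu, ← Units.val_mul, Units.val_inj] at h
  rw [← h, Subgroup.mul_mem_cancel_left H huH]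

lemma IsUniquelyFactored.inter_subgroup (hφ : ∀ i, P i → ∃ u ∈ H, (u : M) = φ i)
    {B : Set Mˣ} {g : Mˣ} (hB : IsUniquelyFactored P φ B g) (hg : g ∈ H) :
    IsUniquelyFactored P φ (B ∩ H) g := by
  obtain ⟨r, ⟨hr, hrB, hrg⟩, huniq⟩ := hB
  exact ⟨r, ⟨hr, ⟨hrB, (mem_iff_of_mul_val_eq hφ hr hrg).2 hg⟩, hrg⟩,
    fun s ⟨hs, hsB, hsg⟩ => huniq s ⟨hs, hsB.1, hsg⟩⟩

lemma isUniquelyFactored_mul_transversal (hφ : ∀ i, P i → ∃ u ∈ H, (u : M) = φ i)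
    {B₀ T : Set Mˣ} (hB₀ : B₀ ⊆ H) (hfac : ∀ h ∈ H, IsUniquelyFactored P φ B₀ h)
    (hT : Subgroup.IsComplement (H : Set Mˣ) T) (g : Mˣ) :
    IsUniquelyFactored P φ (B₀ * T) g := by
  obtain ⟨⟨t, ht⟩, hgt, huniqT⟩ := Subgroup.isComplement_iff_existsUnique_mul_inv_mem.mp hT g
  obtain ⟨⟨i, b₀⟩, ⟨hi, hb₀, hprod⟩, huniq⟩ := hfac _ hgt
  refine ⟨(i, b₀ * t), ⟨hi, Set.mul_mem_mul hb₀ ht, (mul_val_mul_eq_iff _ _ _ _).2 hprod⟩, ?_⟩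
  rintro ⟨j, _⟩ ⟨hj, ⟨b₀', hb₀', t', ht', rfl⟩, hjg⟩
  rw [mul_val_mul_eq_iff] at hjg
  have ht't : t' = t := congrArg Subtype.val <|
    huniqT ⟨t', ht'⟩ ((mem_iff_of_mul_val_eq hφ hj hjg).1 (hB₀ hb₀'))
  subst ht't
  obtain ⟨rfl, rfl⟩ := Prod.ext_iff.1 (huniq (j, b₀') ⟨hj, hb₀', hjg⟩)
  rfl

theorem exists_factor_iff_exists_factor_subgroup [H.FiniteIndex]
    (hφ : ∀ i, P i → ∃ u ∈ H, (u : M) = φ i) :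
    (∃ B : Finset Mˣ, ∀ g, IsUniquelyFactored P φ B g) ↔
      ∃ B : Finset Mˣ, (∀ b ∈ B, b ∈ H) ∧ ∀ g ∈ H, IsUniquelyFactored P φ B g := by
  classical
  constructor
  · rintro ⟨B, hB⟩
    refine ⟨B.filter (· ∈ H), fun b hb => (Finset.mem_filter.1 hb).2, fun g hg => ?_⟩
    rw [Finset.coe_filter]
    exact (hB g).inter_subgroup hφ hg
  · rintro ⟨B₀, hB₀, hfac⟩
    obtain ⟨T, hT, -⟩ := Subgroup.exists_isComplement_right H 1
    refine ⟨B₀ * hT.finite_right.toFinset, fun g => ?_⟩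
    rw [Finset.coe_mul, Set.Finite.coe_toFinset]
    exact isUniquelyFactored_mul_transversal hφ hB₀ hfac hT g

end Factorization

section SmallUnits

variable {p k₂ : ℕ}

lemma exists_unit_mem_closure_eq_natCast (hcop : Nat.gcd p k₂.factorial = 1) {j : ℕ}
    (hj : 1 ≤ j) (hjk : j ≤ k₂) :
    ∃ u ∈ Subgroup.closure {u : (ZMod p)ˣ | (u : ZMod p) = -1 ∨
        ∃ k : ℕ, 2 ≤ k ∧ k ≤ k₂ ∧ (u : ZMod p) = (k : ZMod p)},
      (u : ZMod p) = j := by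
  rcases hj.eq_or_lt with rfl | hj
  · exact ⟨1, one_mem _, by simp⟩
  have hjp : Nat.Coprime j p :=
    (Nat.Coprime.symm hcop).coprime_dvd_left (Nat.dvd_factorial (by omega) hjk)
  exact ⟨ZMod.unitOfCoprime j hjp,
    Subgroup.subset_closure (Or.inr ⟨j, hj, hjk, ZMod.coe_unitOfCoprime j hjp⟩),
    ZMod.coe_unitOfCoprime j hjp⟩

lemma exists_unit_mem_closure_eq_intCast {k₁ : ℕ} (h12 : k₁ ≤ k₂)
    (hcop : Nat.gcd p k₂.factorial = 1) {r : ℤ} (hr : r ∈ Finset.Icc (-(k₁ : ℤ)) (k₂ : ℤ))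
    (hr0 : r ≠ 0) :
    ∃ u ∈ Subgroup.closure {u : (ZMod p)ˣ | (u : ZMod p) = -1 ∨
        ∃ k : ℕ, 2 ≤ k ∧ k ≤ k₂ ∧ (u : ZMod p) = (k : ZMod p)},
      (u : ZMod p) = r := by
  rw [Finset.mem_Icc] at hr
  obtain ⟨j, rfl | rfl⟩ := Int.eq_nat_or_neg r
  · obtain ⟨u, hu, hval⟩ := exists_unit_mem_closure_eq_natCast hcop (j := j) (by omega) (by omega)
    exact ⟨u, hu, by simpa using hval⟩
  · obtain ⟨u, hu, hval⟩ := exists_unit_mem_closure_eq_natCast hcop (j := j) (by omega) (by omega)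
    refine ⟨-1 * u, mul_mem (Subgroup.subset_closure (Or.inl ?_)) hu, ?_⟩
    · simp
    · simp [hval]

end SmallUnits

theorem stmt14_general (p : ℕ) (k₁ k₂ : ℕ)
    (h12 : k₁ ≤ k₂)
    (hcop : Nat.gcd p k₂.factorial = 1) :
    (∃ B : Finset (ZMod p)ˣ, ∀ g : (ZMod p)ˣ,
        ∃! r : ℤ × (ZMod p)ˣ,
          r.1 ∈ Finset.Icc (-(k₁ : ℤ)) (k₂ : ℤ) ∧ r.1 ≠ 0 ∧ r.2 ∈ B ∧
            (r.1 : ZMod p) * (r.2 : ZMod p) = (g : ZMod p)) ↔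
    (∃ B : Finset (ZMod p)ˣ,
        (∀ b ∈ B, b ∈ Subgroup.closure
          {u : (ZMod p)ˣ | (u : ZMod p) = -1 ∨
            ∃ k : ℕ, 2 ≤ k ∧ k ≤ k₂ ∧ (u : ZMod p) = (k : ZMod p)}) ∧
        ∀ g ∈ Subgroup.closure
          {u : (ZMod p)ˣ | (u : ZMod p) = -1 ∨
            ∃ k : ℕ, 2 ≤ k ∧ k ≤ k₂ ∧ (u : ZMod p) = (k : ZMod p)},
          ∃! r : ℤ × (ZMod p)ˣ,
            r.1 ∈ Finset.Icc (-(k₁ : ℤ)) (k₂ : ℤ) ∧ r.1 ≠ 0 ∧ r.2 ∈ B ∧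
              (r.1 : ZMod p) * (r.2 : ZMod p) = (g : ZMod p)) := by
  have key := exists_factor_iff_exists_factor_subgroup
    (P := fun r : ℤ => r ∈ Finset.Icc (-(k₁ : ℤ)) (k₂ : ℤ) ∧ r ≠ 0)
    (φ := fun r : ℤ => (r : ZMod p))
    (fun _ hr => exists_unit_mem_closure_eq_intCast h12 hcop hr.1 hr.2)
  simpa only [IsUniquelyFactored, and_assoc, Finset.mem_coe] using key

theorem stmt14 (p : ℕ) (hp : p.Prime) (hodd : Odd p) (k₁ k₂ : ℕ)
    (h1 : 1 ≤ k₁) (h12 : k₁ ≤ k₂) (hmod : p % (k₁ + k₂) = 1)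
    (hcop : Nat.gcd p k₂.factorial = 1) :
    (∃ B : Finset (ZMod p)ˣ, ∀ g : (ZMod p)ˣ,
        ∃! r : ℤ × (ZMod p)ˣ,
          r.1 ∈ Finset.Icc (-(k₁ : ℤ)) (k₂ : ℤ) ∧ r.1 ≠ 0 ∧ r.2 ∈ B ∧
            (r.1 : ZMod p) * (r.2 : ZMod p) = (g : ZMod p)) ↔
    (∃ B : Finset (ZMod p)ˣ,
        (∀ b ∈ B, b ∈ Subgroup.closure
          {u : (ZMod p)ˣ | (u : ZMod p) = -1 ∨
            ∃ k : ℕ, 2 ≤ k ∧ k ≤ k₂ ∧ (u : ZMod p) = (k : ZMod p)}) ∧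
        ∀ g ∈ Subgroup.closure
          {u : (ZMod p)ˣ | (u : ZMod p) = -1 ∨
            ∃ k : ℕ, 2 ≤ k ∧ k ≤ k₂ ∧ (u : ZMod p) = (k : ZMod p)},
          ∃! r : ℤ × (ZMod p)ˣ,
            r.1 ∈ Finset.Icc (-(k₁ : ℤ)) (k₂ : ℤ) ∧ r.1 ≠ 0 ∧ r.2 ∈ B ∧
              (r.1 : ZMod p) * (r.2 : ZMod p) = (g : ZMod p)) :=
  stmt14_general p k₁ k₂ h12 hcop
end

section
/- Let m, n be coprime positive integers and A = {a₁,…,a_m}, B = {b₁,…,b_n} sets of integers such that A + B is a complete set of representatives modulo mn. Then A is a complete set of residues modulo m and B is a complete set of residues modulo n. -/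
open Finset AddMonoidAlgebra

private lemma coeffsum15 {p N : ℕ} [NeZero N] {ι : Type*} (s : Finset ι) (g : ι → ZMod N) (z : ZMod N) :
    (∑ i ∈ s, AddMonoidAlgebra.single (g i) (1 : ZMod p)).coeff z
      = ((s.filter (fun i => g i = z)).card : ZMod p) := by
  rw [AddMonoidAlgebra.coeff_sum, Finsupp.finset_sum_apply, Finset.card_filter, Nat.cast_sum]
  simp [Finsupp.single_apply]

private lemma key15 (N p : ℕ) [NeZero N] (hp : p.Prime) (A B : Finset ℤ)
    (hpA : ¬ p ∣ A.card) (f : ℤ → ZMod N)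
    (hbij : ∀ z : ZMod N, ((A ×ˢ B).filter (fun x => f x.1 + (x.2 : ZMod N) = z)).card = 1) :
    ∀ z : ZMod N, ((A ×ˢ B).filter (fun x => (p : ZMod N) * f x.1 + (x.2 : ZMod N) = z)).card = 1 := by
  haveI : Fact p.Prime := ⟨hp⟩
  set R := AddMonoidAlgebra (ZMod p) (ZMod N) with hR
  haveI : CharP R p :=
    charP_of_injective_ringHom (R := ZMod p) (f := AddMonoidAlgebra.singleZeroRingHom) (AddMonoidAlgebra.single_right_injective (m := 0)) p
  set α : R := ∑ a ∈ A, AddMonoidAlgebra.single (f a) (1 : ZMod p) with hα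
  set β : R := ∑ b ∈ B, AddMonoidAlgebra.single ((b : ZMod N)) (1 : ZMod p) with hβ
  set δ : R := ∑ z : ZMod N, AddMonoidAlgebra.single z (1 : ZMod p) with hδ
  have hδapp : ∀ z : ZMod N, δ.coeff z = 1 := by
    intro z
    rw [hδ, coeffsum15]
    simp [Finset.filter_eq' Finset.univ z]
  have hprod : ∀ (g₁ : ℤ → ZMod N),
      (∑ a ∈ A, AddMonoidAlgebra.single (g₁ a) (1 : ZMod p)) * β
        = ∑ x ∈ A ×ˢ B, AddMonoidAlgebra.single (g₁ x.1 + (x.2 : ZMod N)) (1 : ZMod p) := by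
    intro g₁
    rw [hβ, Finset.sum_mul_sum, Finset.sum_product]
    simp [AddMonoidAlgebra.single_mul_single]
  have hαβ : α * β = δ := by
    rw [hα, hprod]
    ext z
    rw [coeffsum15, hδapp, hbij z, Nat.cast_one]
  have hsδ : ∀ g : ZMod N, AddMonoidAlgebra.single g (1 : ZMod p) * δ = δ := by
    intro g
    rw [hδ, Finset.mul_sum]
    simp only [AddMonoidAlgebra.single_mul_single, one_mul]
    exact Fintype.sum_equiv (Equiv.addLeft g) _ _ (fun z => rfl)
  have hαδ : α * δ = A.card • δ := by
    rw [hα, Finset.sum_mul]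
    rw [Finset.sum_congr rfl (fun a _ => hsδ (f a)), Finset.sum_const]
  have hαkδ : ∀ k : ℕ, α ^ k * δ = (A.card ^ k) • δ := by
    intro k
    induction k with
    | zero => simp
    | succ k ih =>
        rw [pow_succ, mul_assoc, hαδ, mul_smul_comm, ih, smul_smul, pow_succ, Nat.mul_comm]
  have hcard1 : ((A.card ^ (p - 1) : ℕ) : R) = 1 := by
    have h0 : ((A.card : ZMod p)) ≠ 0 := by
      rwa [Ne, ZMod.natCast_eq_zero_iff]
    have h1 : ((A.card : ZMod p)) ^ (p - 1) = 1 := ZMod.pow_card_sub_one_eq_one h0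
    calc ((A.card ^ (p - 1) : ℕ) : R) = algebraMap (ZMod p) R ((A.card ^ (p-1) : ℕ) : ZMod p) := by
          rw [map_natCast]
      _ = 1 := by
          have : ((A.card ^ (p-1) : ℕ) : ZMod p) = 1 := by push_cast; exact_mod_cast h1
          rw [this, map_one]
  have hαp : α ^ p = ∑ a ∈ A, AddMonoidAlgebra.single ((p : ZMod N) * f a) (1 : ZMod p) := by
    rw [hα, sum_pow_char]
    refine Finset.sum_congr rfl (fun a _ => ?_)
    rw [AddMonoidAlgebra.single_pow, one_pow, nsmul_eq_mul]
  have hfinal : ∑ x ∈ A ×ˢ B, AddMonoidAlgebra.single ((p : ZMod N) * f x.1 + (x.2 : ZMod N)) (1 : ZMod p) = δ := by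
    rw [← hprod (fun a => (p : ZMod N) * f a), ← hαp]
    have hps : α ^ p = α ^ (p - 1) * α := by
      rw [← pow_succ, Nat.sub_add_cancel hp.one_le]
    rw [hps, mul_assoc, hαβ, hαkδ, nsmul_eq_mul, hcard1, one_mul]
  have hcast : ∀ z : ZMod N,
      ((((A ×ˢ B).filter (fun x => (p : ZMod N) * f x.1 + (x.2 : ZMod N) = z)).card : ZMod p)) = 1 := by
    intro z
    have := congrArg (fun r : R => r.coeff z) hfinal
    rwa [coeffsum15, hδapp] at this
  have hge : ∀ z : ZMod N, 1 ≤ ((A ×ˢ B).filter (fun x => (p : ZMod N) * f x.1 + (x.2 : ZMod N) = z)).card := by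
    intro z
    rcases Nat.eq_zero_or_pos ((A ×ˢ B).filter (fun x => (p : ZMod N) * f x.1 + (x.2 : ZMod N) = z)).card with h0 | h1
    · exfalso
      have := hcast z
      rw [h0] at this
      simp at this
    · exact h1
  have h1 : (A ×ˢ B).card = ∑ z : ZMod N, ((A ×ˢ B).filter (fun x => (p : ZMod N) * f x.1 + (x.2 : ZMod N) = z)).card :=
    Finset.card_eq_sum_card_fiberwise (fun x _ => Finset.mem_univ _)
  have h2 : (A ×ˢ B).card = ∑ z : ZMod N, ((A ×ˢ B).filter (fun x => f x.1 + (x.2 : ZMod N) = z)).card :=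
    Finset.card_eq_sum_card_fiberwise (fun x _ => Finset.mem_univ _)
  rw [Finset.sum_congr rfl (fun z _ => hbij z)] at h2
  have hsum : ∑ z : ZMod N, ((A ×ˢ B).filter (fun x => (p : ZMod N) * f x.1 + (x.2 : ZMod N) = z)).card
      = ∑ _z : ZMod N, 1 := by rw [← h1, h2]
  intro z
  have := (Finset.sum_eq_sum_iff_of_le (fun i _ => hge i)).mp hsum.symm z (Finset.mem_univ z)
  omega

private lemma iter15 (N : ℕ) [NeZero N] (A B : Finset ℤ) :
    ∀ k : ℕ, k ≠ 0 → (∀ q : ℕ, q.Prime → q ∣ k → ¬ q ∣ A.card) →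
    ∀ f : ℤ → ZMod N,
      (∀ z : ZMod N, ((A ×ˢ B).filter (fun x => f x.1 + (x.2 : ZMod N) = z)).card = 1) →
      ∀ z : ZMod N, ((A ×ˢ B).filter (fun x => (k : ZMod N) * f x.1 + (x.2 : ZMod N) = z)).card = 1 := by
  intro k
  induction k using Nat.strong_induction_on with
  | _ k ih =>
    intro hk0 hq f hf
    rcases eq_or_ne k 1 with rfl | hk1
    · simpa using hf
    · set p := k.minFac with hpdef
      have hp : p.Prime := Nat.minFac_prime hk1
      have hpd : p ∣ k := Nat.minFac_dvd k
      have hstep := key15 N p hp A B (hq p hp hpd) f hf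
      have hlt : k / p < k := Nat.div_lt_self (by omega) hp.one_lt
      have hne : k / p ≠ 0 := by
        intro h0
        have := Nat.div_mul_cancel hpd
        rw [h0, zero_mul] at this
        omega
      have hq' : ∀ q : ℕ, q.Prime → q ∣ k / p → ¬ q ∣ A.card :=
        fun q hq2 hd => hq q hq2 (hd.trans (Nat.div_dvd_of_dvd hpd))
      have hrec := ih (k / p) hlt hne hq' (fun a => (p : ZMod N) * f a) hstep
      intro z
      have h2 := hrec z
      have hmul : ∀ a : ℤ, ((k / p : ℕ) : ZMod N) * ((p : ZMod N) * f a) = (k : ZMod N) * f a := by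
        intro a
        rw [← mul_assoc, ← Nat.cast_mul, Nat.div_mul_cancel hpd]
      simpa only [hmul] using h2

private lemma extract15 (N m k : ℕ) [NeZero N] (hm : 0 < m) (hN : (N : ℤ) = m * k)
    (A B : Finset ℤ) (hA : A.card = m) (hBne : B.Nonempty)
    (hQ : ∀ z : ZMod N, ((A ×ˢ B).filter
      (fun x => (k : ZMod N) * (x.1 : ZMod N) + (x.2 : ZMod N) = z)).card = 1) :
    ∀ z : ZMod m, ∃! a : ℤ, a ∈ A ∧ (a : ZMod m) = z := by
  haveI : NeZero m := ⟨hm.ne'⟩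
  obtain ⟨b, hb⟩ := hBne
  have hinj : ∀ a₁ ∈ A, ∀ a₂ ∈ A, (a₁ : ZMod m) = (a₂ : ZMod m) → a₁ = a₂ := by
    intro a₁ h₁ a₂ h₂ he
    have hmod : (m : ℤ) ∣ a₁ - a₂ := by
      have h' := ((ZMod.intCast_eq_intCast_iff _ _ _).mp he).dvd
      have : -(a₂ - a₁) = a₁ - a₂ := by ring
      exact this ▸ (dvd_neg.mpr h')
    obtain ⟨t, ht⟩ := hmod
    have hcasteq : ((k : ZMod N) * (a₂ : ZMod N) + (b : ZMod N))
        = ((k : ZMod N) * (a₁ : ZMod N) + (b : ZMod N)) := by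
      have hdvd : (N : ℤ) ∣ (k * a₁ + b) - (k * a₂ + b) := by
        refine ⟨t, ?_⟩
        rw [hN]
        have : (k:ℤ) * a₁ + b - ((k:ℤ) * a₂ + b) = (k:ℤ) * (a₁ - a₂) := by ring
        rw [this, ht]; ring
      have := Int.modEq_iff_dvd.mpr hdvd
      have hc := (ZMod.intCast_eq_intCast_iff _ _ N).mpr this
      push_cast at hc
      exact_mod_cast hc
    set z₀ : ZMod N := (k : ZMod N) * (a₁ : ZMod N) + (b : ZMod N) with hz₀
    have hm₁ : ((a₁, b) : ℤ × ℤ) ∈ (A ×ˢ B).filter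
        (fun x => (k : ZMod N) * (x.1 : ZMod N) + (x.2 : ZMod N) = z₀) := by
      simp [Finset.mem_filter, Finset.mem_product, h₁, hb, hz₀]
    have hm₂ : ((a₂, b) : ℤ × ℤ) ∈ (A ×ˢ B).filter
        (fun x => (k : ZMod N) * (x.1 : ZMod N) + (x.2 : ZMod N) = z₀) := by
      simp [Finset.mem_filter, Finset.mem_product, h₂, hb, hz₀, hcasteq]
    have hcard := hQ z₀
    rw [Finset.card_eq_one] at hcard
    obtain ⟨x₀, hx₀⟩ := hcard
    rw [hx₀, Finset.mem_singleton] at hm₁ hm₂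
    have : ((a₁, b) : ℤ × ℤ) = (a₂, b) := hm₁.trans hm₂.symm
    exact congrArg Prod.fst this
  intro z
  have himg : A.image (fun a : ℤ => (a : ZMod m)) = Finset.univ := by
    apply Finset.eq_univ_of_card
    rw [Finset.card_image_of_injOn (fun a ha a' ha' => hinj a ha a' ha'), hA, ZMod.card]
  have hz : z ∈ A.image (fun a : ℤ => (a : ZMod m)) := by rw [himg]; exact Finset.mem_univ z
  obtain ⟨a, ha, hae⟩ := Finset.mem_image.mp hz
  exact ⟨a, ⟨ha, hae⟩, fun a' ⟨ha', hae'⟩ => hinj a' ha' a ha (by rw [hae, hae'])⟩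

private lemma toCount15 (N : ℕ) [NeZero N] (A B : Finset ℤ)
    (h : ∀ z : ZMod N, ∃! x : ℤ × ℤ, x.1 ∈ A ∧ x.2 ∈ B ∧ ((x.1 + x.2 : ℤ) : ZMod N) = z) :
    ∀ z : ZMod N, ((A ×ˢ B).filter
      (fun x => (x.1 : ZMod N) + (x.2 : ZMod N) = z)).card = 1 := by
  intro z
  obtain ⟨x₀, hx₀, hu⟩ := h z
  rw [Finset.card_eq_one]
  refine ⟨x₀, ?_⟩
  ext y
  simp only [Finset.mem_filter, Finset.mem_product, Finset.mem_singleton]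
  constructor
  · rintro ⟨⟨hy1, hy2⟩, hy3⟩
    exact hu y ⟨hy1, hy2, by push_cast; exact hy3⟩
  · rintro rfl
    obtain ⟨h1, h2, h3⟩ := hx₀
    push_cast at h3
    exact ⟨⟨h1, h2⟩, h3⟩

theorem stmt15 (m n : ℕ) (hm : 0 < m) (hn : 0 < n) (hmn : Nat.Coprime m n)
    (A B : Finset ℤ) (hA : A.card = m) (hB : B.card = n)
    (h : ∀ z : ZMod (m * n), ∃! x : ℤ × ℤ,
        x.1 ∈ A ∧ x.2 ∈ B ∧ ((x.1 + x.2 : ℤ) : ZMod (m * n)) = z) :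
    (∀ z : ZMod m, ∃! a : ℤ, a ∈ A ∧ (a : ZMod m) = z) ∧
    (∀ z : ZMod n, ∃! b : ℤ, b ∈ B ∧ (b : ZMod n) = z) := by
  haveI : NeZero (m * n) := ⟨Nat.mul_ne_zero hm.ne' hn.ne'⟩
  have hAne : A.Nonempty := Finset.card_pos.mp (by rw [hA]; exact hm)
  have hBne : B.Nonempty := Finset.card_pos.mp (by rw [hB]; exact hn)
  have hbase := toCount15 (m * n) A B h
  have hswap : ∀ z : ZMod (m * n), ∃! x : ℤ × ℤ,
      x.1 ∈ B ∧ x.2 ∈ A ∧ ((x.1 + x.2 : ℤ) : ZMod (m * n)) = z := by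
    intro z
    obtain ⟨x₀, ⟨h1, h2, h3⟩, hu⟩ := h z
    refine ⟨(x₀.2, x₀.1), ⟨h2, h1, by rwa [add_comm]⟩, ?_⟩
    rintro ⟨y1, y2⟩ ⟨hy1, hy2, hy3⟩
    have := hu (y2, y1) ⟨hy2, hy1, by rwa [add_comm]⟩
    rw [Prod.ext_iff] at this ⊢
    exact ⟨this.2, this.1⟩
  have hbase' := toCount15 (m * n) B A hswap
  constructor
  · -- A complete mod m
    have hq : ∀ q : ℕ, q.Prime → q ∣ n → ¬ q ∣ A.card := by
      intro q hq2 hdn hdA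
      rw [hA] at hdA
      have : q ∣ 1 := hmn ▸ Nat.dvd_gcd hdA hdn
      exact hq2.one_lt.ne' (Nat.dvd_one.mp this)
    have hiter := iter15 (m * n) A B n hn.ne' hq (fun a => (a : ZMod (m * n))) hbase
    exact extract15 (m * n) m n hm (by push_cast; ring) A B hA hBne hiter
  · -- B complete mod n
    have hq : ∀ q : ℕ, q.Prime → q ∣ m → ¬ q ∣ B.card := by
      intro q hq2 hdm hdB
      rw [hB] at hdB
      have : q ∣ 1 := hmn ▸ Nat.dvd_gcd hdm hdB
      exact hq2.one_lt.ne' (Nat.dvd_one.mp this)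
    have hiter := iter15 (m * n) B A m hm.ne' hq (fun b => (b : ZMod (m * n))) hbase'
    exact extract15 (m * n) n m hn (by push_cast; ring) B A hB hAne hiter
end

section
/- Let p be a prime with p ≡ 1 (mod 4) and let B be a perfect B[−1,3](p) set in Z_p. If i ∈ B, then (−3/2)·i ∈ B and (−2/3)·i ∈ B; consequently the entire coset i·⟨−3/2⟩ is contained in B, where ⟨−3/2⟩ is the subgroup of Z_p* generated by −3·2⁻¹. -/
private lemma negj_not_mem {p : ℕ} [Fact p.Prime] {B : Finset (ZMod p)}
    (hB : IsPerfectSplitter 1 3 p B) {j : ZMod p} (hj : j ∈ B) (hj0 : j ≠ 0) :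
    -j ∉ B := by
  intro h
  obtain ⟨r, -, hu⟩ := hB.1 j hj0
  have e1 := hu (1, j) ⟨by norm_num [Finset.mem_Icc], by norm_num, hj, by push_cast; ring⟩
  have e2 := hu (-1, -j) ⟨by norm_num [Finset.mem_Icc], by norm_num, h, by push_cast; ring⟩
  have := congrArg Prod.fst (e1.trans e2.symm)
  norm_num at this

private lemma step1 {p : ℕ} [Fact p.Prime] (h2 : (2 : ZMod p) ≠ 0) (h3 : (3 : ZMod p) ≠ 0)
    {B : Finset (ZMod p)} (hB : IsPerfectSplitter 1 3 p B) {j : ZMod p} (hj : j ∈ B) :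
    (-3 : ZMod p) * (2 : ZMod p)⁻¹ * j ∈ B := by
  by_cases hj0 : j = 0
  · subst hj0; simpa using hj
  have hnegj := negj_not_mem hB hj hj0
  have h3j : (3 : ZMod p) * j ≠ 0 := mul_ne_zero h3 hj0
  have h3jB : (3 : ZMod p) * j ∉ B := by
    intro h
    obtain ⟨r, -, hu⟩ := hB.1 ((3 : ZMod p) * j) h3j
    have e1 := hu (3, j) ⟨by norm_num [Finset.mem_Icc], by norm_num, hj, by push_cast; ring⟩
    have e2 := hu (1, (3 : ZMod p) * j) ⟨by norm_num [Finset.mem_Icc], by norm_num, h, by push_cast; ring⟩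
    have := congrArg Prod.fst (e1.trans e2.symm)
    norm_num at this
  have hneg3jB : -((3 : ZMod p) * j) ∉ B := by
    intro h
    obtain ⟨r, -, hu⟩ := hB.1 ((3 : ZMod p) * j) h3j
    have e1 := hu (3, j) ⟨by norm_num [Finset.mem_Icc], by norm_num, hj, by push_cast; ring⟩
    have e2 := hu (-1, -((3 : ZMod p) * j)) ⟨by norm_num [Finset.mem_Icc], by norm_num, h, by push_cast; ring⟩
    have := congrArg Prod.fst (e1.trans e2.symm)
    norm_num at this
  obtain ⟨⟨a, b⟩, ⟨hmem, hane, hbB, hab⟩, -⟩ := hB.1 (-((3 : ZMod p) * j)) (neg_ne_zero.mpr h3j)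
  simp only at hane hab
  rw [Finset.mem_Icc] at hmem
  push_cast at hmem
  obtain ⟨hm1, hm2⟩ := hmem
  push_cast at hab
  interval_cases a
  · push_cast at hab
    exact absurd (show (3 : ZMod p) * j ∈ B by
      have : b = 3 * j := by linear_combination -hab
      rwa [this] at hbB) h3jB
  · exact absurd rfl hane
  · push_cast at hab
    exact absurd (show -((3 : ZMod p) * j) ∈ B by
      have : b = -(3 * j) := by linear_combination hab
      rwa [this] at hbB) hneg3jB
  · push_cast at hab
    have : (-3 : ZMod p) * 2⁻¹ * j = b := by
      field_simp
      linear_combination -hab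
    rwa [this]
  · push_cast at hab
    exact absurd (show -j ∈ B by
      have : b = -j := by
        apply mul_left_cancel₀ h3
        linear_combination hab
      rwa [this] at hbB) hnegj

private lemma step2 {p : ℕ} [Fact p.Prime] (h2 : (2 : ZMod p) ≠ 0) (h3 : (3 : ZMod p) ≠ 0)
    {B : Finset (ZMod p)} (hB : IsPerfectSplitter 1 3 p B) {j : ZMod p} (hj : j ∈ B) :
    (-2 : ZMod p) * (3 : ZMod p)⁻¹ * j ∈ B := by
  by_cases hj0 : j = 0
  · subst hj0; simpa using hj
  have hnegj := negj_not_mem hB hj hj0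
  have h2j : (2 : ZMod p) * j ≠ 0 := mul_ne_zero h2 hj0
  have h2jB : (2 : ZMod p) * j ∉ B := by
    intro h
    obtain ⟨r, -, hu⟩ := hB.1 ((2 : ZMod p) * j) h2j
    have e1 := hu (2, j) ⟨by norm_num [Finset.mem_Icc], by norm_num, hj, by push_cast; ring⟩
    have e2 := hu (1, (2 : ZMod p) * j) ⟨by norm_num [Finset.mem_Icc], by norm_num, h, by push_cast; ring⟩
    have := congrArg Prod.fst (e1.trans e2.symm)
    norm_num at this
  have hneg2jB : -((2 : ZMod p) * j) ∉ B := by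
    intro h
    obtain ⟨r, -, hu⟩ := hB.1 ((2 : ZMod p) * j) h2j
    have e1 := hu (2, j) ⟨by norm_num [Finset.mem_Icc], by norm_num, hj, by push_cast; ring⟩
    have e2 := hu (-1, -((2 : ZMod p) * j)) ⟨by norm_num [Finset.mem_Icc], by norm_num, h, by push_cast; ring⟩
    have := congrArg Prod.fst (e1.trans e2.symm)
    norm_num at this
  obtain ⟨⟨a, b⟩, ⟨hmem, hane, hbB, hab⟩, -⟩ := hB.1 (-((2 : ZMod p) * j)) (neg_ne_zero.mpr h2j)
  simp only at hane hab
  rw [Finset.mem_Icc] at hmem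
  push_cast at hmem
  obtain ⟨hm1, hm2⟩ := hmem
  push_cast at hab
  interval_cases a
  · push_cast at hab
    exact absurd (show (2 : ZMod p) * j ∈ B by
      have : b = 2 * j := by linear_combination -hab
      rwa [this] at hbB) h2jB
  · exact absurd rfl hane
  · push_cast at hab
    exact absurd (show -((2 : ZMod p) * j) ∈ B by
      have : b = -(2 * j) := by linear_combination hab
      rwa [this] at hbB) hneg2jB
  · push_cast at hab
    exact absurd (show -j ∈ B by
      have : b = -j := by
        apply mul_left_cancel₀ h2
        linear_combination hab
      rwa [this] at hbB) hnegj
  · push_cast at hab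
    have : (-2 : ZMod p) * 3⁻¹ * j = b := by
      field_simp
      linear_combination -hab
    rwa [this]

theorem stmt16 (p : ℕ) [hp : Fact p.Prime] (hmod : p % 4 = 1)
    (B : Finset (ZMod p)) (hB : IsPerfectSplitter 1 3 p B)
    (i : ZMod p) (hi : i ∈ B) :
    (-3 : ZMod p) * (2 : ZMod p)⁻¹ * i ∈ B ∧ (-2 : ZMod p) * (3 : ZMod p)⁻¹ * i ∈ B ∧
      ∀ t : ℤ, ((-3 : ZMod p) * (2 : ZMod p)⁻¹) ^ t * i ∈ B := by
  have hp5 : 5 ≤ p := by have := hp.out.two_le; omega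
  have h2 : (2 : ZMod p) ≠ 0 := by
    intro h
    have : p ∣ 2 := by
      have := (ZMod.natCast_eq_zero_iff 2 p).mp (by exact_mod_cast h)
      exact this
    have := Nat.le_of_dvd (by norm_num) this
    omega
  have h3 : (3 : ZMod p) ≠ 0 := by
    intro h
    have : p ∣ 3 := (ZMod.natCast_eq_zero_iff 3 p).mp (by exact_mod_cast h)
    have := Nat.le_of_dvd (by norm_num) this
    omega
  refine ⟨step1 h2 h3 hB hi, step2 h2 h3 hB hi, ?_⟩
  set u : ZMod p := (-3 : ZMod p) * (2 : ZMod p)⁻¹ with hu_def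
  have hu : u ≠ 0 := mul_ne_zero (neg_ne_zero.mpr h3) (inv_ne_zero h2)
  have huinv : u⁻¹ = (-2 : ZMod p) * (3 : ZMod p)⁻¹ := by
    apply inv_eq_of_mul_eq_one_right
    rw [hu_def]
    field_simp
  intro t
  induction t using Int.induction_on with
  | zero => simpa using hi
  | succ n ih =>
      have h : u ^ ((n : ℤ) + 1) * i = u * (u ^ (n : ℤ) * i) := by
        rw [zpow_add_one₀ hu]; ring
      rw [h]
      exact step1 h2 h3 hB ih
  | pred n ih =>
      have h : u ^ (-(n : ℤ) - 1) * i = u⁻¹ * (u ^ (-(n : ℤ)) * i) := by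
        rw [zpow_sub_one₀ hu]; ring
      rw [h, huinv]
      exact step2 h2 h3 hB ih
end

section
/- Let p be a prime with p ≡ 1 (mod 4) and let B be a perfect B[−1,3](p) set in Z_p. If i ∈ B, then 6i ∈ B or −6i ∈ B. -/
/-!
Write `6 i = a b` with `a ∈ {-1, 1, 2, 3}` and `b ∈ B`. For `a = ±1` we are done. For `a = 2`
we get `b = 3 i`, so `1 · b = 3 · i` are two factorizations of the same nonzero element; for
`a = 3` likewise `1 · b = 2 · i`. Both contradict uniqueness.
-/

theorem ZMod.natCast_ne_zero_of_lt {q n : ℕ} (hn : 0 < n) (hnq : n < q) : (n : ZMod q) ≠ 0 := by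
  rw [Ne, ZMod.natCast_eq_zero_iff]
  exact Nat.not_dvd_of_pos_of_lt hn hnq

namespace IsPerfectSplitter

variable {k₁ k₂ q : ℕ} {B : Finset (ZMod q)}

theorem exists_mul_eq (hB : IsPerfectSplitter k₁ k₂ q B) {g : ZMod q} (hg : g ≠ 0) :
    ∃ a ∈ Finset.Icc (-(k₁ : ℤ)) k₂, a ≠ 0 ∧ ∃ b ∈ B, (a : ZMod q) * b = g := by
  obtain ⟨⟨a, b⟩, ⟨ha, ha0, hb, hab⟩, -⟩ := hB.1 g hg
  exact ⟨a, ha, ha0, b, hb, hab⟩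

theorem eq_of_mul_eq_mul (hB : IsPerfectSplitter k₁ k₂ q B) {a a' : ℤ} {b b' : ZMod q}
    (ha : a ∈ Finset.Icc (-(k₁ : ℤ)) k₂) (ha0 : a ≠ 0) (hb : b ∈ B)
    (ha' : a' ∈ Finset.Icc (-(k₁ : ℤ)) k₂) (ha'0 : a' ≠ 0) (hb' : b' ∈ B)
    (h : (a : ZMod q) * b = a' * b') (hne : (a : ZMod q) * b ≠ 0) : a = a' ∧ b = b' :=
  Prod.mk.inj ((hB.1 _ hne).unique ⟨ha, ha0, hb, rfl⟩ ⟨ha', ha'0, hb', h.symm⟩)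

theorem mul_notMem (hB : IsPerfectSplitter k₁ k₂ q B) (hk₂ : 1 ≤ k₂) {c : ℤ}
    (hc : c ∈ Finset.Icc (-(k₁ : ℤ)) k₂) (hc0 : c ≠ 0) (hc1 : c ≠ 1) {b : ZMod q} (hb : b ∈ B)
    (hcb : (c : ZMod q) * b ≠ 0) : (c : ZMod q) * b ∉ B := fun h ↦
  hc1 (hB.eq_of_mul_eq_mul hc hc0 hb (by simp; omega) one_ne_zero h (by simp) hcb).1

end IsPerfectSplitter

theorem stmt17_general (p : ℕ) (hp : p.Prime)
    (B : Finset (ZMod p)) (hB : IsPerfectSplitter 1 3 p B)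
    (i : ZMod p) (hi : i ∈ B) :
    (6 : ZMod p) * i ∈ B ∨ (-6 : ZMod p) * i ∈ B := by
  have := Fact.mk hp
  rcases eq_or_ne i 0 with rfl | hi0
  · simpa using hi
  -- `4 |B| = p - 1` rules out `p = 2, 3`
  have hp5 : 5 ≤ p := by have := hp.two_le; have := hB.2; omega
  have h2 : (2 : ZMod p) ≠ 0 := by exact_mod_cast ZMod.natCast_ne_zero_of_lt two_pos (by omega)
  have h3 : (3 : ZMod p) ≠ 0 := by exact_mod_cast ZMod.natCast_ne_zero_of_lt three_pos (by omega)
  obtain ⟨a, ha, ha0, b, hb, hab⟩ :=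
    hB.exists_mul_eq (mul_ne_zero (mul_ne_zero h2 h3) hi0 : (2 * 3 : ZMod p) * i ≠ 0)
  rcases (by simp at ha; omega : a = -1 ∨ a = 1 ∨ a = 2 ∨ a = 3) with rfl | rfl | rfl | rfl
  · right
    convert hb using 1
    push_cast at hab
    linear_combination hab
  · left
    convert hb using 1
    push_cast at hab
    linear_combination -hab
  · have hb3 : b = ((3 : ℤ) : ZMod p) * i := by
      push_cast at hab ⊢
      exact mul_left_cancel₀ h2 (by linear_combination hab)
    exact absurd (hb3 ▸ hb) (hB.mul_notMem (by norm_num) (by simp) (by norm_num)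
      (by norm_num) hi (by push_cast; exact mul_ne_zero h3 hi0))
  · have hb2 : b = ((2 : ℤ) : ZMod p) * i := by
      push_cast at hab ⊢
      exact mul_left_cancel₀ h3 (by linear_combination hab)
    exact absurd (hb2 ▸ hb) (hB.mul_notMem (by norm_num) (by simp) (by norm_num)
      (by norm_num) hi (by push_cast; exact mul_ne_zero h2 hi0))

theorem stmt17 (p : ℕ) (hp : p.Prime) (hmod : p % 4 = 1)
    (B : Finset (ZMod p)) (hB : IsPerfectSplitter 1 3 p B)
    (i : ZMod p) (hi : i ∈ B) :
    (6 : ZMod p) * i ∈ B ∨ (-6 : ZMod p) * i ∈ B :=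
  stmt17_general p hp B hB i hi
end

section
/- Let p be a prime with p ≡ 1 (mod 4). If a perfect B[−1,3](p) set exists, then the multiplicative order of −2·3⁻¹ in Z_p* is odd. -/
theorem stmt18 (p : ℕ) [hp : Fact p.Prime] (hmod : p % 4 = 1)
    (B : Finset (ZMod p)) (hB : IsPerfectSplitter 1 3 p B) :
    Odd (orderOf ((-2 : ZMod p) * (3 : ZMod p)⁻¹)) := by
  classical
  obtain ⟨huniq, hcard⟩ := hB
  simp only [Nat.cast_one, Nat.cast_ofNat] at huniq
  have hp5 : 5 ≤ p := by
    have h2 := hp.out.two_le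
    rcases Nat.lt_or_ge p 5 with h | h
    · interval_cases p <;> omega
    · exact h
  have h2 : (2 : ZMod p) ≠ 0 := by
    intro h
    have : ((2 : ℕ) : ZMod p) = 0 := by exact_mod_cast h
    have hdvd : p ∣ 2 := (ZMod.natCast_eq_zero_iff 2 p).mp this
    have := Nat.le_of_dvd (by norm_num) hdvd
    omega
  have h3 : (3 : ZMod p) ≠ 0 := by
    intro h
    have : ((3 : ℕ) : ZMod p) = 0 := by exact_mod_cast h
    have hdvd : p ∣ 3 := (ZMod.natCast_eq_zero_iff 3 p).mp this
    have := Nat.le_of_dvd (by norm_num) hdvd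
    omega
  -- 0 ∉ B
  have h0B : (0 : ZMod p) ∉ B := by
    intro h0
    set f : ZMod p → ℤ × ZMod p := fun x =>
      if hx : x = 0 then (0, 0) else (huniq x hx).exists.choose with hf
    have hmaps : ∀ x ∈ Finset.univ.erase (0 : ZMod p),
        f x ∈ ((Finset.Icc (-1 : ℤ) 3).erase 0) ×ˢ (B.erase 0) := by
      intro x hx
      obtain ⟨hx0, -⟩ := Finset.mem_erase.mp hx
      have hs := (huniq x hx0).exists.choose_spec
      simp only [hf, dif_neg hx0]
      rw [Finset.mem_product, Finset.mem_erase, Finset.mem_erase]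
      refine ⟨⟨hs.2.1, hs.1⟩, ?_, hs.2.2.1⟩
      intro hb
      apply hx0
      rw [← hs.2.2.2, hb, mul_zero]
    have hinj : Set.InjOn f (Finset.univ.erase (0 : ZMod p)) := by
      intro x hx y hy hxy
      obtain ⟨hx0, -⟩ := Finset.mem_erase.mp hx
      obtain ⟨hy0, -⟩ := Finset.mem_erase.mp hy
      have hsx := (huniq x hx0).exists.choose_spec
      have hsy := (huniq y hy0).exists.choose_spec
      simp only [hf, dif_neg hx0, dif_neg hy0] at hxy
      rw [← hsx.2.2.2, ← hsy.2.2.2, hxy]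
    have hle := Finset.card_le_card_of_injOn f hmaps hinj
    have hc1 : (Finset.univ.erase (0 : ZMod p)).card = p - 1 := by
      rw [Finset.card_erase_of_mem (Finset.mem_univ _), Finset.card_univ, ZMod.card]
    have hc2 : ((Finset.Icc (-1 : ℤ) 3).erase 0).card = 4 := by decide
    have hc3 : (B.erase 0).card = B.card - 1 := Finset.card_erase_of_mem h0
    rw [hc1, Finset.card_product, hc2, hc3] at hle
    have hBpos : 1 ≤ B.card := Finset.card_pos.mpr ⟨0, h0⟩
    omega
  have hbne : ∀ b ∈ B, b ≠ 0 := fun b hb h => h0B (h ▸ hb)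
  -- B ∩ -B = ∅
  have hnegB : ∀ b ∈ B, -b ∉ B := by
    intro b hb hnb
    obtain ⟨r, hr, hru⟩ := huniq b (hbne b hb)
    have e1 := hru (1, b) ⟨Finset.mem_Icc.mpr (by norm_num), one_ne_zero, hb, by push_cast; ring⟩
    have e2 := hru (-1, -b) ⟨Finset.mem_Icc.mpr (by norm_num), by norm_num, hnb, by push_cast; ring⟩
    have : ((1 : ℤ), b) = ((-1 : ℤ), -b) := e1.trans e2.symm
    have := (Prod.mk.injEq _ _ _ _ ▸ this).1
    omega
  -- g B ⊆ B
  have hstep : ∀ b ∈ B, (-2 : ZMod p) * (3 : ZMod p)⁻¹ * b ∈ B := by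
    intro b hb
    have hb0 : b ≠ 0 := hbne b hb
    have hx0 : (-2 : ZMod p) * b ≠ 0 := mul_ne_zero (neg_ne_zero.mpr h2) hb0
    obtain ⟨⟨a, c⟩, ⟨haI, ha0, hcB, hac⟩, hru⟩ := huniq _ hx0
    simp only at haI ha0 hcB hac
    have h2b0 : (2 : ZMod p) * b ≠ 0 := mul_ne_zero h2 hb0
    obtain ⟨r2, hr2, hru2⟩ := huniq _ h2b0
    have e2 := hru2 (2, b) ⟨Finset.mem_Icc.mpr (by norm_num), by norm_num, hb, by push_cast; ring⟩
    have ha : a = -1 ∨ a = 1 ∨ a = 2 ∨ a = 3 := by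
      rw [Finset.mem_Icc] at haI; omega
    push_cast at hac
    rcases ha with h | h | h | h
    · subst h
      push_cast at hac
      -- -c = -2b so c = 2b
      have e3 := hru2 (1, c) ⟨Finset.mem_Icc.mpr (by norm_num), one_ne_zero, hcB, by
        push_cast; linear_combination -hac ⟩
      have : ((2 : ℤ), b) = ((1 : ℤ), c) := e2.trans e3.symm
      have := (Prod.mk.injEq _ _ _ _ ▸ this).1
      omega
    · subst h
      push_cast at hac
      have e3 := hru2 (-1, c) ⟨Finset.mem_Icc.mpr (by norm_num), by norm_num, hcB, by
        push_cast; linear_combination -hac⟩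
      have : ((2 : ℤ), b) = ((-1 : ℤ), c) := e2.trans e3.symm
      have := (Prod.mk.injEq _ _ _ _ ▸ this).1
      omega
    · subst h
      push_cast at hac
      -- 2c = -2b so c = -b, contradiction with hnegB
      exfalso
      apply hnegB b hb
      have : c = -b := by
        have h2' : (2 : ZMod p) * c = 2 * (-b) := by linear_combination hac
        exact mul_left_cancel₀ h2 h2'
      rwa [this] at hcB
    · subst h
      push_cast at hac
      -- 3c = -2b, so c = -2 * 3⁻¹ * b
      have : (-2 : ZMod p) * (3 : ZMod p)⁻¹ * b = c := by
        field_simp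
        linear_combination -hac
      rwa [this]
  set g : ZMod p := (-2 : ZMod p) * (3 : ZMod p)⁻¹ with hg
  have hpow : ∀ n : ℕ, ∀ b ∈ B, g ^ n * b ∈ B := by
    intro n
    induction n with
    | zero => intro b hb; simpa using hb
    | succ n ih =>
      intro b hb
      have h1 := hstep _ (ih b hb)
      have : g ^ (n + 1) * b = g * (g ^ n * b) := by ring
      rwa [this]
  have hg0 : g ≠ 0 := mul_ne_zero (neg_ne_zero.mpr h2) (inv_ne_zero h3)
  have hfin : IsOfFinOrder g := by
    rw [isOfFinOrder_iff_pow_eq_one]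
    exact ⟨p - 1, by omega, ZMod.pow_card_sub_one_eq_one hg0⟩
  have hord : 0 < orderOf g := hfin.orderOf_pos
  rw [← Nat.not_even_iff_odd]
  intro heven
  obtain ⟨m, hm⟩ := heven
  have hm1 : 1 ≤ m := by omega
  have hsq : (g ^ m) ^ 2 = 1 := by
    rw [← pow_mul]
    have : m * 2 = orderOf g := by omega
    rw [this, pow_orderOf_eq_one]
  have hne1 : g ^ m ≠ 1 := by
    intro h
    have := orderOf_le_of_pow_eq_one (by omega : 0 < m) h
    omega
  have hneg1 : g ^ m = -1 := by
    have hfac : (g ^ m - 1) * (g ^ m + 1) = 0 := by linear_combination hsq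
    rcases mul_eq_zero.mp hfac with h | h
    · exact absurd (by linear_combination h) hne1
    · linear_combination h
  obtain ⟨b, hb⟩ := Finset.card_pos.mp (show 0 < B.card by omega)
  have := hpow m b hb
  rw [hneg1] at this
  simp only [neg_one_mul] at this
  exact hnegB b hb this
end

section
/- Let p be a prime with p ≡ 5 (mod 8). Then there exists a perfect B[−1,3](p) set if and only if 6 is a quartic residue modulo p, i.e., 6^((p−1)/4) ≡ 1 (mod p). -/
namespace Stmt19Aux
set_option linter.unusedSectionVars false
variable {p : ℕ} [hpf : Fact p.Prime]

lemma two_ne_zero' (h5 : 5 ≤ p) : (2 : ZMod p) ≠ 0 := by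
  have : ((2:ℕ) : ZMod p) ≠ 0 := by
    rw [Ne, ZMod.natCast_eq_zero_iff]
    intro h
    exact absurd (Nat.le_of_dvd (by norm_num) h) (by omega)
  simpa using this

lemma three_ne_zero' (h5 : 5 ≤ p) : (3 : ZMod p) ≠ 0 := by
  have : ((3:ℕ) : ZMod p) ≠ 0 := by
    rw [Ne, ZMod.natCast_eq_zero_iff]
    intro h
    exact absurd (Nat.le_of_dvd (by norm_num) h) (by omega)
  simpa using this

lemma u_sq (hmod : p % 8 = 5) : ((2 : ZMod p) ^ ((p-1)/4)) ^ 2 = -1 := by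
  have h5 : 5 ≤ p := by omega
  have h2 : (2 : ZMod p) ≠ 0 := two_ne_zero' h5
  have hns : ¬ IsSquare (2 : ZMod p) := by
    rw [ZMod.exists_sq_eq_two_iff (by omega : p ≠ 2)]; omega
  have hne1 : (2 : ZMod p) ^ (p / 2) ≠ 1 := fun h => hns ((ZMod.euler_criterion p h2).mpr h)
  have h4 : (2 : ZMod p) ^ (p - 1) = 1 := ZMod.pow_card_sub_one_eq_one h2
  set x : ZMod p := (2 : ZMod p) ^ ((p-1)/4) with hx
  have hx2 : x ^ 2 ≠ 1 := by
    rw [hx, ← pow_mul, show (p-1)/4*2 = p/2 by omega]; exact hne1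
  have hx4 : (x ^ 2) ^ 2 = 1 := by
    rw [hx, ← pow_mul, mul_comm 2 2, ← pow_mul, show (p-1)/4 * (2 * 2) = p - 1 by omega]
    exact h4
  have hfac : (x ^ 2 - 1) * (x ^ 2 + 1) = 0 := by linear_combination hx4
  rcases mul_eq_zero.mp hfac with h | h
  · exact absurd (by linear_combination h) hx2
  · linear_combination h

lemma four_root {u z : ZMod p} (hu : u ^ 2 = -1) (hz : z ^ 4 = 1) :
    z = 1 ∨ z = -1 ∨ z = u ∨ z = -u := by
  have hfac : (z - 1) * (z + 1) * (z - u) * (z + u) = 0 := by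
    linear_combination hz - (z ^ 2 - 1) * hu
  rcases mul_eq_zero.mp hfac with h | h
  · rcases mul_eq_zero.mp h with h | h
    · rcases mul_eq_zero.mp h with h | h
      · exact Or.inl (by linear_combination h)
      · exact Or.inr (Or.inl (by linear_combination h))
    · exact Or.inr (Or.inr (Or.inl (by linear_combination h)))
  · exact Or.inr (Or.inr (Or.inr (by linear_combination h)))

lemma distinct4 (h5 : 5 ≤ p) {u : ZMod p} (hu : u ^ 2 = -1) :
    (1 : ZMod p) ≠ -1 ∧ u ≠ 1 ∧ u ≠ -1 ∧ u ≠ -u ∧ (1 : ZMod p) ≠ -u ∧ (-1 : ZMod p) ≠ -u := by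
  haveI : Fact (2 < p) := ⟨by omega⟩
  have hn : (-1 : ZMod p) ≠ 1 := ZMod.neg_one_ne_one
  have h2 : (2 : ZMod p) ≠ 0 := two_ne_zero' h5
  have hm0 : (-1 : ZMod p) ≠ 0 := neg_ne_zero.mpr one_ne_zero
  have hu0 : u ≠ 0 := fun h => hm0 (by rw [← hu, h]; ring)
  refine ⟨fun h => hn h.symm, ?_, ?_, ?_, ?_, ?_⟩
  · intro h; rw [h] at hu; exact hn (by linear_combination -hu)
  · intro h; rw [h] at hu; exact hn (by linear_combination -hu)
  · intro h
    have : (2 : ZMod p) * u = 0 := by linear_combination h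
    exact hu0 ((mul_eq_zero.mp this).resolve_left h2)
  · intro h
    have hu1 : u = -1 := by linear_combination h
    rw [hu1] at hu; exact hn (by linear_combination -hu)
  · intro h
    have hu1 : u = 1 := by linear_combination h
    rw [hu1] at hu; exact hn (by linear_combination -hu)

def S (p : ℕ) [Fact p.Prime] (c : ZMod p) : Finset (ZMod p) :=
  Finset.univ.filter (fun g => g ≠ 0 ∧ g ^ ((p-1)/4) = c)

lemma mem_S {c g : ZMod p} : g ∈ S p c ↔ g ≠ 0 ∧ g ^ ((p-1)/4) = c := by
  simp [S]

lemma pow_four_root (hmod : p % 8 = 5) {g : ZMod p} (hg : g ≠ 0) :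
    (g ^ ((p-1)/4)) ^ 4 = 1 := by
  rw [← pow_mul, show (p-1)/4 * 4 = p - 1 by omega]
  exact ZMod.pow_card_sub_one_eq_one hg

lemma card_S_mul (h2 : (2 : ZMod p) ≠ 0) (c : ZMod p) :
    (S p c).card = (S p ((2 : ZMod p) ^ ((p-1)/4) * c)).card := by
  apply Finset.card_nbij (fun g => 2 * g)
  · intro g hg
    rcases mem_S.mp hg with ⟨hg0, hgc⟩
    exact mem_S.mpr ⟨mul_ne_zero h2 hg0, by rw [mul_pow, hgc]⟩
  · intro a _ b _ hab
    exact mul_left_cancel₀ h2 hab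
  · intro b hb
    rcases mem_S.mp hb with ⟨hb0, hbc⟩
    refine ⟨2⁻¹ * b, ?_, ?_⟩
    · have h2i : (2 : ZMod p)⁻¹ ≠ 0 := inv_ne_zero h2
      have hpow : ((2:ZMod p)⁻¹ * b) ^ ((p-1)/4) = c := by
        rw [mul_pow, inv_pow, hbc, inv_mul_cancel_left₀ (pow_ne_zero _ h2)]
      exact Finset.mem_coe.mpr (mem_S.mpr ⟨mul_ne_zero h2i hb0, hpow⟩)
    · simp [mul_inv_cancel_left₀ h2]

lemma S_cards (hmod : p % 8 = 5) (c : ZMod p)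
    (hc : c = 1 ∨ c = -1 ∨ c = (2:ZMod p)^((p-1)/4) ∨ c = -((2:ZMod p)^((p-1)/4))) :
    4 * (S p c).card = p - 1 := by
  have h5 : 5 ≤ p := by omega
  have h2 : (2 : ZMod p) ≠ 0 := two_ne_zero' h5
  have hu : ((2 : ZMod p) ^ ((p-1)/4)) ^ 2 = -1 := u_sq hmod
  set u : ZMod p := (2 : ZMod p) ^ ((p-1)/4) with hudef
  obtain ⟨d1, d2, d3, d4, d5, d6⟩ := distinct4 h5 hu
  -- the four cards are all equal
  have e1 : (S p 1).card = (S p u).card := by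
    have := card_S_mul h2 (1 : ZMod p); rwa [mul_one] at this
  have e2 : (S p u).card = (S p (-1)).card := by
    have := card_S_mul h2 u
    rwa [show u * u = -1 by rw [← pow_two]; exact hu] at this
  have e3 : (S p (-1)).card = (S p (-u)).card := by
    have := card_S_mul h2 (-1 : ZMod p)
    rwa [show u * (-1) = -u by ring] at this
  -- partition
  have hdisj : ∀ c₁ c₂ : ZMod p, c₁ ≠ c₂ → Disjoint (S p c₁) (S p c₂) := by
    intro c₁ c₂ hne
    rw [Finset.disjoint_left]
    intro g hg1 hg2
    exact hne ((mem_S.mp hg1).2 ▸ (mem_S.mp hg2).2 ▸ rfl)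
  have hunion : (S p 1 ∪ S p (-1)) ∪ (S p u ∪ S p (-u)) = Finset.univ.erase 0 := by
    ext g
    simp only [Finset.mem_union, Finset.mem_erase, Finset.mem_univ, and_true, mem_S]
    constructor
    · rintro ((⟨h, _⟩ | ⟨h, _⟩) | (⟨h, _⟩ | ⟨h, _⟩)) <;> exact h
    · intro hg
      rcases four_root hu (pow_four_root hmod hg) with h | h | h | h
      · exact Or.inl (Or.inl ⟨hg, h⟩)
      · exact Or.inl (Or.inr ⟨hg, h⟩)
      · exact Or.inr (Or.inl ⟨hg, h⟩)
      · exact Or.inr (Or.inr ⟨hg, h⟩)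
  have hcards : (S p 1).card + (S p (-1)).card + ((S p u).card + (S p (-u)).card) = p - 1 := by
    rw [← Finset.card_union_of_disjoint (hdisj _ _ d1),
      ← Finset.card_union_of_disjoint (hdisj _ _ d4),
      ← Finset.card_union_of_disjoint ?_, hunion]
    · rw [Finset.card_erase_of_mem (Finset.mem_univ 0), Finset.card_univ, ZMod.card]
    · rw [Finset.disjoint_union_left, Finset.disjoint_union_right, Finset.disjoint_union_right]
      exact ⟨⟨hdisj _ _ (fun h => d2 h.symm), hdisj _ _ d5⟩,
        ⟨hdisj _ _ (fun h => d3 h.symm), hdisj _ _ d6⟩⟩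
  rcases hc with rfl | rfl | rfl | rfl <;> omega

def A : Finset ℤ := {-1, 1, 2, 3}

lemma mem_A_iff {r : ℤ} : r ∈ Finset.Icc (-(1:ℤ)) 3 ∧ r ≠ 0 ↔ r ∈ A := by
  simp only [A, Finset.mem_Icc, Finset.mem_insert, Finset.mem_singleton]
  omega

lemma class_count (hmod : p % 8 = 5) {B : Finset (ZMod p)}
    (hB : ∀ g : ZMod p, g ≠ 0 → ∃! r : ℤ × ZMod p,
      r.1 ∈ Finset.Icc (-(1:ℤ)) 3 ∧ r.1 ≠ 0 ∧ r.2 ∈ B ∧ (r.1 : ZMod p) * r.2 = g)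
    {c : ZMod p} (hc : c ≠ 0) :
    (S p c).card =
      ((A ×ˢ B).filter
        (fun r : ℤ × ZMod p => ((r.1 : ZMod p) * r.2) ^ ((p-1)/4) = c)).card := by
  have hN0 : (p-1)/4 ≠ 0 := by omega
  symm
  apply Finset.card_nbij (fun r : ℤ × ZMod p => (r.1 : ZMod p) * r.2)
  · intro r hr
    rcases Finset.mem_filter.mp hr with ⟨_, hpow⟩
    refine mem_S.mpr ⟨?_, hpow⟩
    intro h0
    rw [show (r.1 : ZMod p) * r.2 = 0 from h0, zero_pow hN0] at hpow
    exact hc hpow.symm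
  · intro r1 hr1 r2 hr2 heq
    simp only [Finset.coe_filter, Set.mem_setOf_eq, Finset.mem_coe, Finset.mem_product] at hr1 hr2
    rcases hr1 with ⟨⟨hA1, hB1⟩, hp1⟩
    rcases hr2 with ⟨⟨hA2, hB2⟩, hp2⟩
    set g := (r1.1 : ZMod p) * r1.2 with hg
    have hg0 : g ≠ 0 := by
      intro h0
      rw [h0, zero_pow hN0] at hp1
      exact hc hp1.symm
    obtain ⟨hA1', hA1''⟩ := mem_A_iff.mpr hA1
    obtain ⟨hA2', hA2''⟩ := mem_A_iff.mpr hA2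
    exact ((hB g hg0).unique ⟨hA1', hA1'', hB1, rfl⟩ ⟨hA2', hA2'', hB2, heq.symm⟩)
  · intro g hg
    have hg' := mem_S.mp (Finset.mem_coe.mp hg)
    obtain ⟨r, ⟨hIcc, hne, hBmem, hprod⟩, _⟩ := hB g hg'.1
    refine ⟨r, ?_, hprod⟩
    simp only [Finset.coe_filter, Set.mem_setOf_eq, Finset.mem_product]
    exact ⟨⟨mem_A_iff.mp ⟨hIcc, hne⟩, hBmem⟩, by rw [hprod]; exact hg'.2⟩
lemma count_decomp (B : Finset (ZMod p)) (P : ℤ × ZMod p → Prop) [DecidablePred P] :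
    ((A ×ˢ B).filter P).card = ∑ a ∈ A, (B.filter (fun b => P (a, b))).card := by
  rw [Finset.card_filter, Finset.sum_product]
  simp only [Finset.card_filter]

lemma filter_translate {B : Finset (ZMod p)} {a d c : ZMod p}
    (haN : a ^ ((p-1)/4) * d = c) (ha : a ^ ((p-1)/4) ≠ 0) :
    (B.filter (fun b => (a * b) ^ ((p-1)/4) = c)).card
      = (B.filter (fun b => b ^ ((p-1)/4) = d)).card := by
  have h : B.filter (fun b => (a * b) ^ ((p-1)/4) = c)
      = B.filter (fun b => b ^ ((p-1)/4) = d) := by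
    apply Finset.filter_congr
    intro b _
    rw [mul_pow]
    constructor
    · intro h; exact mul_left_cancel₀ ha (h.trans haN.symm)
    · intro h; rw [h, haN]
  rw [h]


lemma forward (hmod : p % 8 = 5) {B : Finset (ZMod p)}
    (hB : ∀ g : ZMod p, g ≠ 0 → ∃! r : ℤ × ZMod p,
      r.1 ∈ Finset.Icc (-(1:ℤ)) 3 ∧ r.1 ≠ 0 ∧ r.2 ∈ B ∧ (r.1 : ZMod p) * r.2 = g) :
    (6 : ZMod p) ^ ((p-1)/4) = 1 := by
  by_contra h6
  have h5 : 5 ≤ p := by omega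
  have hNodd : Odd ((p-1)/4) := by rw [Nat.odd_iff]; omega
  have h2 : (2 : ZMod p) ≠ 0 := two_ne_zero' h5
  have h3 : (3 : ZMod p) ≠ 0 := three_ne_zero' h5
  have hu : ((2 : ZMod p) ^ ((p-1)/4)) ^ 2 = -1 := u_sq hmod
  set u : ZMod p := (2 : ZMod p) ^ ((p-1)/4) with hudef
  obtain ⟨d1, d2, d3, d4, d5, d6⟩ := distinct4 h5 hu
  have hm0 : (-1 : ZMod p) ≠ 0 := neg_ne_zero.mpr one_ne_zero
  have hu0 : u ≠ 0 := fun h => hm0 (by rw [← hu, h]; ring)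
  have huu : u * u = -1 := by rw [← pow_two]; exact hu
  set β : ZMod p := (3 : ZMod p) ^ ((p-1)/4) with hβdef
  have hβ4 : β ^ 4 = 1 := pow_four_root hmod h3
  have h63 : (6 : ZMod p) ^ ((p-1)/4) = u * β := by
    rw [show (6 : ZMod p) = 2 * 3 by norm_num, mul_pow]
  have hβcases : β = 1 ∨ β = -1 ∨ β = u := by
    rcases four_root hu hβ4 with h | h | h | h
    · exact Or.inl h
    · exact Or.inr (Or.inl h)
    · exact Or.inr (Or.inr h)
    · exfalso; apply h6; rw [h63, h]; linear_combination -hu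
  have hβ0 : β ≠ 0 := fun h => by
    rw [h] at hβ4; simp at hβ4
  set n : ZMod p → ℕ := fun d => (B.filter (fun b => b ^ ((p-1)/4) = d)).card with hn
  -- master equation
  have master : ∀ c d2' d3' : ZMod p, c ≠ 0 → u * d2' = c → β * d3' = c →
      (S p c).card = n (-c) + (n c + (n d2' + n d3')) := by
    intro c d2' d3' hc hd2 hd3
    have hcc := class_count hmod hB hc
    rw [count_decomp] at hcc
    rw [show A = insert (-1:ℤ) (insert 1 (insert 2 ({3} : Finset ℤ))) from rfl] at hcc
    rw [Finset.sum_insert (by decide), Finset.sum_insert (by decide),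
      Finset.sum_insert (by decide), Finset.sum_singleton] at hcc
    push_cast at hcc
    rw [filter_translate (a := (-1 : ZMod p)) (d := -c)
        (by rw [hNodd.neg_one_pow]; ring) (by rw [hNodd.neg_one_pow]; exact hm0)] at hcc
    rw [filter_translate (a := (1 : ZMod p)) (d := c) (by rw [one_pow, one_mul])
        (by rw [one_pow]; exact one_ne_zero)] at hcc
    rw [filter_translate (a := (2 : ZMod p)) (d := d2') (by rw [← hudef]; exact hd2)
        (by rw [← hudef]; exact hu0)] at hcc
    rw [filter_translate (a := (3 : ZMod p)) (d := d3') (by rw [← hβdef]; exact hd3)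
        (by rw [← hβdef]; exact hβ0)] at hcc
    exact hcc
  have hmu0 : (-u : ZMod p) ≠ 0 := neg_ne_zero.mpr hu0
  have hS1 := S_cards hmod 1 (Or.inl rfl)
  have hS2 := S_cards hmod (-1) (Or.inr (Or.inl rfl))
  have hS3 := S_cards hmod u (Or.inr (Or.inr (Or.inl rfl)))
  have hS4 := S_cards hmod (-u) (Or.inr (Or.inr (Or.inr rfl)))
  rcases hβcases with hβ1 | hβ1 | hβ1
  · have E1 := master 1 (-u) 1 one_ne_zero (by linear_combination -hu) (by rw [hβ1, mul_one])
    have E2 := master (-1) u (-1) hm0 huu (by rw [hβ1, one_mul])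
    have E3 := master u 1 u hu0 (mul_one u) (by rw [hβ1, one_mul])
    have E4 := master (-u) (-1) (-u) hmu0 (by ring) (by rw [hβ1, one_mul])
    simp only [neg_neg] at E1 E2 E3 E4
    omega
  · have E1 := master 1 (-u) (-1) one_ne_zero (by linear_combination -hu) (by rw [hβ1]; ring)
    have E2 := master (-1) u 1 hm0 huu (by rw [hβ1]; ring)
    have E3 := master u 1 (-u) hu0 (mul_one u) (by rw [hβ1]; ring)
    have E4 := master (-u) (-1) u hmu0 (by ring) (by rw [hβ1]; ring)
    simp only [neg_neg] at E1 E2 E3 E4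
    omega
  · have E1 := master 1 (-u) (-u) one_ne_zero (by linear_combination -hu)
      (by rw [hβ1]; linear_combination -hu)
    have E2 := master (-1) u u hm0 huu (by rw [hβ1]; exact huu)
    have E3 := master u 1 1 hu0 (mul_one u) (by rw [hβ1]; exact mul_one u)
    have E4 := master (-u) (-1) (-1) hmu0 (by ring) (by rw [hβ1]; ring)
    simp only [neg_neg] at E1 E2 E3 E4
    omega

lemma backward (hmod : p % 8 = 5) (h6 : (6 : ZMod p) ^ ((p-1)/4) = 1) :
    ∃ B : Finset (ZMod p), (∀ g : ZMod p, g ≠ 0 → ∃! r : ℤ × ZMod p,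
      r.1 ∈ Finset.Icc (-(1:ℤ)) 3 ∧ r.1 ≠ 0 ∧ r.2 ∈ B ∧ (r.1 : ZMod p) * r.2 = g) ∧
      4 * B.card = p - 1 := by
  have h5 : 5 ≤ p := by omega
  have hNodd : Odd ((p-1)/4) := by rw [Nat.odd_iff]; omega
  have h2 : (2 : ZMod p) ≠ 0 := two_ne_zero' h5
  have h3 : (3 : ZMod p) ≠ 0 := three_ne_zero' h5
  have hu : ((2 : ZMod p) ^ ((p-1)/4)) ^ 2 = -1 := u_sq hmod
  set u : ZMod p := (2 : ZMod p) ^ ((p-1)/4) with hudef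
  obtain ⟨d1, d2, d3, d4, d5, d6⟩ := distinct4 h5 hu
  have hm0 : (-1 : ZMod p) ≠ 0 := neg_ne_zero.mpr one_ne_zero
  have hu0 : u ≠ 0 := fun h => hm0 (by rw [← hu, h]; ring)
  have hmu0 : (-u : ZMod p) ≠ 0 := neg_ne_zero.mpr hu0
  have hβ : (3 : ZMod p) ^ ((p-1)/4) = -u := by
    have h63 : u * (3 : ZMod p) ^ ((p-1)/4) = 1 := by
      rw [hudef, ← mul_pow, show (2 : ZMod p) * 3 = 6 by norm_num]
      exact h6
    have h64 : u * -u = 1 := by linear_combination -hu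
    exact mul_left_cancel₀ hu0 (h63.trans h64.symm)
  refine ⟨S p 1, ?_, S_cards hmod 1 (Or.inl rfl)⟩
  intro g hg
  have pow1 : (((1:ℤ) : ZMod p)) ^ ((p-1)/4) = 1 := by push_cast; exact one_pow _
  have powm1 : (((-1:ℤ) : ZMod p)) ^ ((p-1)/4) = -1 := by push_cast; exact hNodd.neg_one_pow
  have pow2 : (((2:ℤ) : ZMod p)) ^ ((p-1)/4) = u := by push_cast; rw [hudef]
  have pow3 : (((3:ℤ) : ZMod p)) ^ ((p-1)/4) = -u := by push_cast; exact hβ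
  have hg4 := four_root hu (pow_four_root hmod hg)
  have hex : ∃ r : ℤ × ZMod p, r.1 ∈ Finset.Icc (-(1:ℤ)) 3 ∧ r.1 ≠ 0 ∧ r.2 ∈ S p 1 ∧
      (r.1 : ZMod p) * r.2 = g := by
    rcases hg4 with h | h | h | h
    · exact ⟨(1, g), by norm_num, by norm_num, mem_S.mpr ⟨hg, h⟩, by push_cast; ring⟩
    · refine ⟨(-1, -g), by norm_num, by norm_num,
        mem_S.mpr ⟨neg_ne_zero.mpr hg, ?_⟩, by push_cast; ring⟩
      rw [hNodd.neg_pow, h]; ring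
    · refine ⟨(2, 2⁻¹ * g), by norm_num, by norm_num,
        mem_S.mpr ⟨mul_ne_zero (inv_ne_zero h2) hg, ?_⟩, ?_⟩
      · rw [mul_pow, inv_pow, h, ← hudef]
        exact inv_mul_cancel₀ hu0
      · push_cast
        rw [mul_inv_cancel_left₀ h2]
    · refine ⟨(3, 3⁻¹ * g), by norm_num, by norm_num,
        mem_S.mpr ⟨mul_ne_zero (inv_ne_zero h3) hg, ?_⟩, ?_⟩
      · rw [mul_pow, inv_pow, h, hβ]
        exact inv_mul_cancel₀ hmu0
      · push_cast
        rw [mul_inv_cancel_left₀ h3]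
  obtain ⟨r, hr⟩ := hex
  refine ⟨r, hr, ?_⟩
  -- uniqueness
  have f1 : (-1 : ZMod p) ≠ 1 := fun h => d1 h.symm
  have f2 : (1 : ZMod p) ≠ u := fun h => d2 h.symm
  have f3 : (-1 : ZMod p) ≠ u := fun h => d3 h.symm
  have f4 : (-u : ZMod p) ≠ u := fun h => d4 h.symm
  have f5 : (-u : ZMod p) ≠ 1 := fun h => d5 h.symm
  have f6 : (-u : ZMod p) ≠ -1 := fun h => d6 h.symm
  have cast_ne : ∀ x : ℤ, x ∈ Finset.Icc (-(1:ℤ)) 3 → x ≠ 0 → ((x : ZMod p)) ≠ 0 := by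
    intro x hI h0
    have hx : x = -1 ∨ x = 1 ∨ x = 2 ∨ x = 3 := by
      have := Finset.mem_Icc.mp hI; omega
    rcases hx with rfl | rfl | rfl | rfl
    · push_cast; exact hm0
    · push_cast; exact one_ne_zero
    · push_cast; exact h2
    · push_cast; exact h3
  rintro ⟨a', b'⟩ ⟨hI', h0', hS', hprod'⟩
  obtain ⟨hI, h0, hS, hprod⟩ := hr
  have hval' : ((a' : ZMod p)) ^ ((p-1)/4) = g ^ ((p-1)/4) := by
    rw [← hprod', mul_pow, (mem_S.mp hS').2, mul_one]
  have hval : ((r.1 : ZMod p)) ^ ((p-1)/4) = g ^ ((p-1)/4) := by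
    rw [← hprod, mul_pow, (mem_S.mp hS).2, mul_one]
  have hpow : ((a' : ZMod p)) ^ ((p-1)/4) = ((r.1 : ZMod p)) ^ ((p-1)/4) :=
    hval'.trans hval.symm
  have hx' : a' = -1 ∨ a' = 1 ∨ a' = 2 ∨ a' = 3 := by
    have := Finset.mem_Icc.mp hI'; omega
  have hx : r.1 = -1 ∨ r.1 = 1 ∨ r.1 = 2 ∨ r.1 = 3 := by
    have := Finset.mem_Icc.mp hI; omega
  have haa : a' = r.1 := by
    rcases hx' with h | h | h | h <;> rcases hx with h' | h' | h' | h' <;>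
      rw [h, h'] <;> rw [h, h'] at hpow <;>
      simp only [pow1, powm1, pow2, pow3] at hpow <;>
      first
        | rfl
        | exact absurd hpow (by assumption)
  have hbb : b' = r.2 := by
    apply mul_left_cancel₀ (cast_ne r.1 hI h0)
    rw [hprod, ← hprod', haa]
  rw [Prod.ext_iff]
  exact ⟨haa, hbb⟩

end Stmt19Aux

theorem stmt19 (p : ℕ) (hp : p.Prime) (hmod : p % 8 = 5) :
    (∃ B : Finset (ZMod p), IsPerfectSplitter 1 3 p B) ↔
      (6 : ZMod p) ^ ((p - 1) / 4) = 1 := by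
  haveI : Fact p.Prime := ⟨hp⟩
  constructor
  · rintro ⟨B, h1, _⟩
    apply Stmt19Aux.forward hmod
    intro g hg
    simpa using h1 g hg
  · intro h6
    obtain ⟨B, h1, h2⟩ := Stmt19Aux.backward hmod h6
    refine ⟨B, ?_, ?_⟩
    · intro g hg
      simpa using h1 g hg
    · simpa using h2
end
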